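/- arXiv:1712.06741 — 9 statements merged into one kernel-verified Lean document; each statement's English description precedes it below -/
import Mathlib

section
/- Let S = <a, a+d, ..., a+wd> be an arithmetical numerical monoid with gcd(a,d)=1 and 0 < w < a. For integers c1, c2 with 0 ≤ c2 < a, the element n = c1·a + c2·d belongs to S if and only if c2 ≤ c1·w. -/
/-- Membership in the numerical monoid generated by `a + i*d` for `0 ≤ i ≤ w`
with the generators indexed by `G` omitted (`G = ∅` gives the full arithmetical monoid). -/
def AMem (a d w : ℕ) (G : Set ℕ) (n : ℤ) : Prop :=
  ∃ z : Fin (w + 1) → ℕ, (∀ i : Fin (w + 1), (i : ℕ) ∈ G → z i = 0) ∧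
    n = ∑ i : Fin (w + 1), (z i : ℤ) * ((a : ℤ) + ((i : ℕ) : ℤ) * (d : ℤ))

/-- The set of factorization lengths of `n` over the generators `a + i*d`, `0 ≤ i ≤ w`,
with the generators indexed by `G` omitted. -/
def ALen (a d w : ℕ) (G : Set ℕ) (n : ℤ) : Set ℤ :=
  {ℓ | ∃ z : Fin (w + 1) → ℕ, (∀ i : Fin (w + 1), (i : ℕ) ∈ G → z i = 0) ∧
    n = ∑ i : Fin (w + 1), (z i : ℤ) * ((a : ℤ) + ((i : ℕ) : ℤ) * (d : ℤ)) ∧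
    (∑ i : Fin (w + 1), (z i : ℤ)) = ℓ}

/-- The set of length sets. -/
def ALenSets (a d w : ℕ) (G : Set ℕ) : Set (Set ℤ) :=
  {L | ∃ n : ℤ, AMem a d w G n ∧ L = ALen a d w G n}

lemma AMem_add {a d w : ℕ} {G : Set ℕ} {m n : ℤ} (hm : AMem a d w G m) (hn : AMem a d w G n) :
    AMem a d w G (m + n) := by
  obtain ⟨z1, hz1, he1⟩ := hm
  obtain ⟨z2, hz2, he2⟩ := hn
  refine ⟨fun i => z1 i + z2 i, fun i hi => by simp [hz1 i hi, hz2 i hi], ?_⟩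
  rw [he1, he2, ← Finset.sum_add_distrib]
  apply Finset.sum_congr rfl
  intros; push_cast; ring

lemma AMem_single (a d w : ℕ) (v j : ℕ) (hj : j ≤ w) :
    AMem a d w ∅ ((v : ℤ) * ((a : ℤ) + (j : ℤ) * d)) := by
  refine ⟨fun i => if i = ⟨j, by omega⟩ then v else 0, by simp, ?_⟩
  rw [Finset.sum_eq_single (⟨j, by omega⟩ : Fin (w + 1))]
  · simp
  · intro i _ hne; simp [hne]
  · simp

theorem stmt0 (a d w : ℕ) (hgcd : Nat.gcd a d = 1) (hw0 : 0 < w) (hwa : w < a)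
    (c1 c2 : ℤ) (hc2 : 0 ≤ c2) (hc2a : c2 < (a : ℤ)) :
    AMem a d w ∅ (c1 * a + c2 * d) ↔ c2 ≤ c1 * w := by
  have ha0 : (0 : ℤ) < a := by exact_mod_cast (show 0 < a by omega)
  have hw0' : (0 : ℤ) < w := by exact_mod_cast hw0
  have hd0 : (0 : ℤ) ≤ d := by positivity
  constructor
  · rintro ⟨z, -, hz⟩
    set Z := ∑ i : Fin (w + 1), (z i : ℤ) with hZ
    set I := ∑ i : Fin (w + 1), (z i : ℤ) * ((i : ℕ) : ℤ) with hI
    have hn : c1 * a + c2 * d = Z * a + I * d := by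
      rw [hz, hZ, hI, Finset.sum_mul, Finset.sum_mul, ← Finset.sum_add_distrib]
      apply Finset.sum_congr rfl
      intros; ring
    have hI0 : 0 ≤ I := Finset.sum_nonneg (fun i _ => by positivity)
    have hZ0 : 0 ≤ Z := Finset.sum_nonneg (fun i _ => by positivity)
    have hIZ : I ≤ Z * w := by
      rw [hI, hZ, Finset.sum_mul]
      apply Finset.sum_le_sum
      intro i _
      have hi : ((i : ℕ) : ℤ) ≤ (w : ℤ) := by exact_mod_cast (Nat.lt_succ_iff.mp i.isLt)
      exact mul_le_mul_of_nonneg_left hi (by positivity)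
    have hcop : IsCoprime (a : ℤ) (d : ℤ) := by
      rw [Int.isCoprime_iff_gcd_eq_one]
      simpa using hgcd
    have hdvd : (a : ℤ) ∣ (I - c2) :=
      hcop.dvd_of_dvd_mul_right ⟨c1 - Z, by linear_combination -hn⟩
    obtain ⟨k, hk⟩ := hdvd
    have hk0 : 0 ≤ k := by nlinarith
    have hc1 : c1 = Z + k * d := by
      have h1 : (c1 - Z) * a = (k * d) * a := by linear_combination hn + (d : ℤ) * hk
      have := mul_right_cancel₀ (ne_of_gt ha0) h1
      linarith
    nlinarith [mul_nonneg (mul_nonneg hk0 hd0) (le_of_lt hw0'), mul_nonneg hk0 (le_of_lt ha0)]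
  · intro h
    have hc1 : 0 ≤ c1 := by nlinarith
    set q := c2 / (w : ℤ) with hqdef
    set r := c2 % (w : ℤ) with hrdef
    have hq : (w : ℤ) * q + r = c2 := Int.mul_ediv_add_emod c2 w
    have hr0 : 0 ≤ r := Int.emod_nonneg c2 (ne_of_gt hw0')
    have hrw : r < w := Int.emod_lt_of_pos c2 hw0'
    have hq0 : 0 ≤ q := Int.ediv_nonneg hc2 (le_of_lt hw0')
    by_cases hr : r = 0
    · have hqc1 : q ≤ c1 := by nlinarith
      have key : c1 * a + c2 * d =
          (((c1 - q).toNat : ℤ)) * ((a : ℤ) + ((0 : ℕ) : ℤ) * d) +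
          ((q.toNat : ℤ)) * ((a : ℤ) + (w : ℤ) * d) := by
        rw [Int.toNat_of_nonneg (by linarith), Int.toNat_of_nonneg hq0]
        push_cast
        linear_combination (d : ℤ) * hq.symm + (d : ℤ) * hr
      rw [key]
      exact AMem_add (AMem_single a d w _ 0 (by omega))
        (AMem_single a d w q.toNat w le_rfl)
    · have hr1 : 1 ≤ r := by omega
      have hqc1 : q + 1 ≤ c1 := by nlinarith
      have hrt : (r.toNat : ℤ) = r := Int.toNat_of_nonneg hr0
      have hrtw : r.toNat ≤ w := by omega
      have key : c1 * a + c2 * d =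
          (((c1 - q - 1).toNat : ℤ)) * ((a : ℤ) + ((0 : ℕ) : ℤ) * d) +
          (((1 : ℕ) : ℤ) * ((a : ℤ) + (r.toNat : ℤ) * d) +
          ((q.toNat : ℤ)) * ((a : ℤ) + (w : ℤ) * d)) := by
        rw [Int.toNat_of_nonneg (by linarith), Int.toNat_of_nonneg hq0, hrt]
        push_cast
        linear_combination (d : ℤ) * (hq.symm)
      rw [key]
      exact AMem_add (AMem_single a d w _ 0 (by omega))
        (AMem_add (AMem_single a d w 1 r.toNat hrtw)
          (AMem_single a d w q.toNat w le_rfl))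
end

section
/- Let S = <a, a+d, ..., a+wd> with gcd(a,d)=1 and 0 < w < a. For integers c1, c2 with 0 ≤ c2 < a and n = c1·a + c2·d, the integer c1 is a factorization length of n in S (i.e., there exist nonnegative integers z_0,...,z_w with n = Σ z_i(a+id) and Σ z_i = c1) if and only if c2 ≤ c1·w. -/
lemma ind_sum {M : Type*} [AddCommMonoid M] {w k : ℕ} (hk : k < w + 1) (f : Fin (w+1) → M) :
    ∑ i : Fin (w + 1), (if (i : ℕ) = k then f i else 0) = f ⟨k, hk⟩ := by
  rw [Finset.sum_eq_single_of_mem ⟨k, hk⟩ (Finset.mem_univ _)]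
  · simp
  · intro j _ hj
    have : (j : ℕ) ≠ k := fun h => hj (Fin.ext h)
    simp [this]

lemma key (a d w : ℕ) (z : Fin (w+1) → ℕ) :
    ∑ i : Fin (w + 1), (z i : ℤ) * ((a:ℤ) + ((i:ℕ):ℤ) * d) =
      (∑ i : Fin (w + 1), (z i : ℤ)) * a + (∑ i : Fin (w + 1), (z i : ℤ) * ((i:ℕ):ℤ)) * d := by
  rw [Finset.sum_mul, Finset.sum_mul, ← Finset.sum_add_distrib]
  exact Finset.sum_congr rfl fun i _ => by ring

theorem stmt1 (a d w : ℕ) (hgcd : Nat.gcd a d = 1) (hw0 : 0 < w) (hwa : w < a)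
    (c1 c2 : ℤ) (hc2 : 0 ≤ c2) (hc2a : c2 < (a : ℤ)) :
    c1 ∈ ALen a d w ∅ (c1 * a + c2 * d) ↔ c2 ≤ c1 * w := by
  have hd : 0 < d := by
    rcases Nat.eq_zero_or_pos d with h | h
    · subst h; simp [Nat.gcd_zero_right] at hgcd; omega
    · exact h
  constructor
  · rintro ⟨z, -, hn, hlen⟩
    rw [key] at hn
    rw [hlen] at hn
    have hS : (∑ i : Fin (w + 1), (z i : ℤ) * ((i:ℕ):ℤ)) = c2 := by
      have hd' : (d : ℤ) ≠ 0 := by exact_mod_cast hd.ne'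
      have : (∑ i : Fin (w + 1), (z i : ℤ) * ((i:ℕ):ℤ)) * d = c2 * d := by linarith
      exact mul_right_cancel₀ hd' this
    rw [← hS, ← hlen, Finset.sum_mul]
    refine Finset.sum_le_sum fun i _ => ?_
    have : ((i:ℕ):ℤ) ≤ (w : ℤ) := by exact_mod_cast Nat.lt_succ_iff.mp i.isLt
    exact mul_le_mul_of_nonneg_left this (by positivity)
  · intro h
    have hc1 : 0 ≤ c1 := by nlinarith [hc2, h, (by exact_mod_cast hw0 : (0:ℤ) < w)]
    obtain ⟨C1, e1⟩ : ∃ m : ℕ, (m : ℤ) = c1 := ⟨c1.toNat, Int.toNat_of_nonneg hc1⟩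
    obtain ⟨C2, e2⟩ : ∃ m : ℕ, (m : ℤ) = c2 := ⟨c2.toNat, Int.toNat_of_nonneg hc2⟩
    have hle : C2 ≤ C1 * w := by
      have : (C2 : ℤ) ≤ (C1 : ℤ) * w := by rw [e1, e2]; push_cast; exact h
      exact_mod_cast this
    obtain ⟨q, r, hrw, hqr⟩ : ∃ q r, r < w ∧ q * w + r = C2 :=
      ⟨C2 / w, C2 % w, Nat.mod_lt _ hw0, by rw [Nat.mul_comm]; exact Nat.div_add_mod C2 w⟩
    obtain ⟨e, he0, he1⟩ : ∃ e : ℕ, (r = 0 → e = 0) ∧ (r ≠ 0 → e = 1) := by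
      rcases Nat.eq_zero_or_pos r with h0 | h0
      · exact ⟨0, fun _ => rfl, fun hr => absurd h0 hr⟩
      · exact ⟨1, fun hr => by omega, fun _ => rfl⟩
    have her : e * r = r := by
      rcases Nat.eq_zero_or_pos r with h0 | h0
      · simp [h0]
      · rw [he1 (by omega)]; ring
    have hqe : q + e ≤ C1 := by
      rcases Nat.eq_zero_or_pos r with h0 | h0
      · rw [he0 h0]
        have : q * w ≤ C1 * w := by omega
        have := Nat.le_of_mul_le_mul_right this hw0
        omega
      · rw [he1 (by omega)]
        have : q * w < C1 * w := by omega
        have := Nat.lt_of_mul_lt_mul_right this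
        omega
    set z : Fin (w+1) → ℕ := fun i =>
      (if (i:ℕ) = 0 then C1 - (q + e) else 0) + (if (i:ℕ) = r then e else 0) +
        (if (i:ℕ) = w then q else 0) with hz
    have hsum1 : ∑ i : Fin (w+1), z i = C1 := by
      simp only [hz]
      rw [Finset.sum_add_distrib, Finset.sum_add_distrib,
        ind_sum (by omega : (0:ℕ) < w + 1) (fun _ => C1 - (q + e)),
        ind_sum (by omega : r < w + 1) (fun _ => e),
        ind_sum (by omega : w < w + 1) (fun _ => q)]
      omega
    have hsum2 : ∑ i : Fin (w+1), z i * (i:ℕ) = C2 := by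
      simp only [hz, add_mul, ite_mul, zero_mul]
      rw [Finset.sum_add_distrib, Finset.sum_add_distrib,
        ind_sum (by omega : (0:ℕ) < w + 1) (fun i => (C1 - (q + e)) * (i:ℕ)),
        ind_sum (by omega : r < w + 1) (fun i => e * (i:ℕ)),
        ind_sum (by omega : w < w + 1) (fun i => q * (i:ℕ))]
      simp only [mul_zero]
      omega
    refine ⟨z, fun i hi => absurd hi (Set.notMem_empty _), ?_, ?_⟩
    · rw [key]
      have s1 : (∑ i : Fin (w+1), (z i : ℤ)) = c1 := by
        rw [← e1, ← hsum1]; push_cast; rfl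
      have s2 : (∑ i : Fin (w+1), (z i : ℤ) * ((i:ℕ):ℤ)) = c2 := by
        rw [← e2, ← hsum2]; push_cast; rfl
      rw [s1, s2]
    · rw [← e1, ← hsum1]; push_cast; rfl
end

section
/- Let S = <a, a+d, ..., a+wd> with gcd(a,d)=1 and 0 < w < a. For integers c1, c2 with 0 ≤ c2 < a, n = c1·a + c2·d, and n ∈ S, the maximum factorization length of n in S equals c1. -/
lemma sum_split (a d w : ℕ) (z : Fin (w+1) → ℕ) :
    ∑ i : Fin (w+1), (z i : ℤ) * ((a:ℤ) + ((i:ℕ):ℤ) * (d:ℤ))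
      = (∑ i : Fin (w+1), (z i : ℤ)) * a + (∑ i : Fin (w+1), ((i:ℕ):ℤ) * (z i : ℤ)) * d := by
  rw [Finset.sum_mul, Finset.sum_mul, ← Finset.sum_add_distrib]
  exact Finset.sum_congr rfl (fun i _ => by ring)

lemma key_s2 (a d : ℕ) (ha : 0 < a) (hgcd : Nat.gcd a d = 1)
    (c1 c2 ℓ m : ℤ) (hc2a : c2 < (a:ℤ)) (hm : 0 ≤ m)
    (heq : ℓ * a + m * d = c1 * a + c2 * d) :
    ∃ t : ℤ, t ≤ 0 ∧ ℓ = c1 + t * d ∧ m = c2 - t * a := by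
  have h1 : (ℓ - c1) * a = (c2 - m) * d := by ring_nf; linarith [heq]
  have hcop : IsCoprime (a : ℤ) (d : ℤ) := by
    rw [Int.isCoprime_iff_gcd_eq_one]; exact_mod_cast hgcd
  have hdvd : (a:ℤ) ∣ (c2 - m) := by
    have : (a:ℤ) ∣ (c2 - m) * d := ⟨ℓ - c1, by linarith [h1]⟩
    exact (IsCoprime.dvd_of_dvd_mul_right hcop this)
  obtain ⟨t, ht⟩ := hdvd
  have ha' : (0:ℤ) < a := by exact_mod_cast ha
  have ht0 : t ≤ 0 := by nlinarith
  refine ⟨t, ht0, ?_, by linarith⟩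
  have h2 : (ℓ - c1) * a = (t * d) * a := by rw [h1, ht]; ring
  have := mul_right_cancel₀ (ne_of_gt ha') h2
  linarith



theorem stmt2 (a d w : ℕ) (hgcd : Nat.gcd a d = 1) (hw0 : 0 < w) (hwa : w < a)
    (c1 c2 : ℤ) (hc2 : 0 ≤ c2) (hc2a : c2 < (a : ℤ))
    (hn : AMem a d w ∅ (c1 * a + c2 * d)) :
    IsGreatest (ALen a d w ∅ (c1 * a + c2 * d)) c1 := by
  have ha : 0 < a := lt_trans hw0 hwa
  have hd : 0 < d := by
    rcases Nat.eq_zero_or_pos d with h | h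
    · subst h; simp [Nat.gcd_zero_right] at hgcd; omega
    · exact h
  -- analyze the given factorization
  obtain ⟨z0, -, hz0⟩ := hn
  rw [sum_split] at hz0
  set ℓ0 : ℤ := ∑ i : Fin (w+1), (z0 i : ℤ) with hℓ0def
  set m0 : ℤ := ∑ i : Fin (w+1), ((i:ℕ):ℤ) * (z0 i : ℤ) with hm0def
  have hm0 : 0 ≤ m0 := Finset.sum_nonneg (fun i _ => by positivity)
  have hℓ0 : 0 ≤ ℓ0 := Finset.sum_nonneg (fun i _ => by positivity)
  obtain ⟨t, ht0, htℓ, htm⟩ := key_s2 a d ha hgcd c1 c2 ℓ0 m0 hc2a hm0 hz0.symm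
  have hd' : (0:ℤ) < d := by exact_mod_cast hd
  have ha' : (0:ℤ) < a := by exact_mod_cast ha
  have hc1 : 0 ≤ c1 := by nlinarith
  have hmw : m0 ≤ w * ℓ0 := by
    rw [hm0def, hℓ0def, Finset.mul_sum]
    refine Finset.sum_le_sum (fun i _ => ?_)
    have : ((i:ℕ):ℤ) ≤ w := by exact_mod_cast Nat.le_of_lt_succ i.isLt
    nlinarith [Int.natCast_nonneg (z0 i)]
  have hc2w : c2 ≤ w * c1 := by
    have hq1 : (w:ℤ) * ℓ0 = w * c1 + t * ((w:ℤ)*d) := by rw [htℓ]; ring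
    have h1 : t * ((w:ℤ)*d) ≤ 0 :=
      mul_nonpos_of_nonpos_of_nonneg ht0 (by positivity)
    have h2 : t * (a:ℤ) ≤ 0 :=
      mul_nonpos_of_nonpos_of_nonneg ht0 (by positivity)
    linarith
  constructor
  · -- membership: construct a factorization of length c1
    set C1 := c1.toNat with hC1
    set C2 := c2.toNat with hC2
    have hC1c : (C1:ℤ) = c1 := Int.toNat_of_nonneg hc1
    have hC2c : (C2:ℤ) = c2 := Int.toNat_of_nonneg hc2
    have hCw : C2 ≤ w * C1 := by
      have : (C2:ℤ) ≤ (w:ℤ) * C1 := by rw [hC1c, hC2c]; exact hc2w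
      exact_mod_cast this
    set q := C2 / w with hq
    set r := C2 % w with hr
    have hrw : r < w := Nat.mod_lt _ hw0
    have hdm : w * q + r = C2 := Nat.div_add_mod C2 w
    set e : ℕ := if r = 0 then 0 else 1 with he
    have hqe : q + e ≤ C1 := by
      rcases Nat.eq_zero_or_pos r with h | h
      · simp [he, h]
        have : w * q ≤ w * C1 := by omega
        exact Nat.le_of_mul_le_mul_left this hw0
      · have : ¬ (r = 0) := by omega
        simp [he, this]
        have : w * q < w * C1 := by omega
        have := Nat.lt_of_mul_lt_mul_left this
        omega
    set z : Fin (w+1) → ℕ := fun i =>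
      (if i = (⟨0, by omega⟩ : Fin (w+1)) then C1 - q - e else 0) +
      (if i = (⟨r, by omega⟩ : Fin (w+1)) then e else 0) +
      (if i = (⟨w, by omega⟩ : Fin (w+1)) then q else 0) with hz
    have hone : ∀ (j : Fin (w+1)) (c : ℕ), ∑ i : Fin (w+1), (if i = j then c else 0) = c := by
      intro j c; simp
    have honew : ∀ (j : Fin (w+1)) (c : ℕ),
        ∑ i : Fin (w+1), (i:ℕ) * (if i = j then c else 0) = (j:ℕ) * c := by
      intro j c
      simp [mul_ite, Finset.sum_ite_eq]
    have hsum : ∑ i : Fin (w+1), z i = C1 := by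
      simp only [hz, Finset.sum_add_distrib, hone]
      omega
    have hwsum : ∑ i : Fin (w+1), (i:ℕ) * z i = C2 := by
      simp only [hz, Nat.mul_add, Finset.sum_add_distrib, honew]
      rcases Nat.eq_zero_or_pos r with h | h
      · simp [he, h]; omega
      · have he1 : e = 1 := by simp [he]; omega
        rw [he1]; omega
    refine ⟨z, fun i h => absurd h (Set.notMem_empty _), ?_⟩
    rw [sum_split]
    have c1cast : (∑ i : Fin (w+1), (z i : ℤ)) = (C1 : ℤ) := by
      rw [← hsum]; push_cast; ring
    have c2cast : (∑ i : Fin (w+1), ((i:ℕ):ℤ) * (z i : ℤ)) = (C2 : ℤ) := by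
      rw [← hwsum]; push_cast; ring
    rw [c1cast, c2cast, hC1c, hC2c]
    exact ⟨rfl, rfl⟩
  · -- upper bound
    rintro ℓ ⟨z1, -, hval, hlen⟩
    rw [sum_split] at hval
    have hm1 : 0 ≤ ∑ i : Fin (w+1), ((i:ℕ):ℤ) * (z1 i : ℤ) :=
      Finset.sum_nonneg (fun i _ => by positivity)
    obtain ⟨t1, ht10, ht1ℓ, -⟩ := key_s2 a d ha hgcd c1 c2 _ _ hc2a hm1 hval.symm
    rw [← hlen, ht1ℓ]
    have h1 : t1 * (d:ℤ) ≤ 0 := mul_nonpos_of_nonpos_of_nonneg ht10 (by positivity)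
    linarith
end

section
/- Let S = <a, a+d, ..., a+wd> with gcd(a,d)=1, 4 ≤ w < a, and let S* = <a, a+d, a+(w−1)d, a+wd>. For every n ∈ S with n > (w−3)(a+wd), we have n ∈ S* and L_S(n) = L_{S*}(n). -/
/-- The candidate factorization supported on indices 0, 1, w-1, w. -/
def mk4 (w z0 z1 zw1 zw : ℕ) : Fin (w + 1) → ℕ := fun i =>
  if (i : ℕ) = 0 then z0 else if (i : ℕ) = 1 then z1
  else if (i : ℕ) = w - 1 then zw1 else if (i : ℕ) = w then zw else 0

lemma sum_mk4_gen (w : ℕ) (hw : 4 ≤ w) (z0 z1 zw1 zw : ℕ) (F : ℕ → ℕ → ℤ)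
    (hF : ∀ j, F j 0 = 0) :
    ∑ i : Fin (w + 1), F (i : ℕ) (mk4 w z0 z1 zw1 zw i)
      = F 0 z0 + F 1 z1 + F (w - 1) zw1 + F w zw := by
  have h0 : (0 : ℕ) < w + 1 := by omega
  have h1 : (1 : ℕ) < w + 1 := by omega
  have h2 : w - 1 < w + 1 := by omega
  have h3 : w < w + 1 := by omega
  set i0 : Fin (w + 1) := ⟨0, h0⟩ with hi0
  set i1 : Fin (w + 1) := ⟨1, h1⟩ with hi1
  set i2 : Fin (w + 1) := ⟨w - 1, h2⟩ with hi2
  set i3 : Fin (w + 1) := ⟨w, h3⟩ with hi3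
  have key : ∀ x : Fin (w + 1), x ∉ ({i0, i1, i2, i3} : Finset (Fin (w + 1))) →
      F (x : ℕ) (mk4 w z0 z1 zw1 zw x) = 0 := by
    intro x hx
    simp only [Finset.mem_insert, Finset.mem_singleton] at hx
    push_neg at hx
    obtain ⟨hx0, hx1, hx2, hx3⟩ := hx
    have e0 : (x : ℕ) ≠ 0 := fun h => hx0 (Fin.ext (by simp [hi0, h]))
    have e1 : (x : ℕ) ≠ 1 := fun h => hx1 (Fin.ext (by simp [hi1, h]))
    have e2 : (x : ℕ) ≠ w - 1 := fun h => hx2 (Fin.ext (by simp [hi2, h]))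
    have e3 : (x : ℕ) ≠ w := fun h => hx3 (Fin.ext (by simp [hi3, h]))
    have : mk4 w z0 z1 zw1 zw x = 0 := by
      simp only [mk4]
      rw [if_neg e0, if_neg e1, if_neg e2, if_neg e3]
    rw [this, hF]
  rw [← Finset.sum_subset (Finset.subset_univ ({i0, i1, i2, i3} : Finset (Fin (w + 1))))
    (fun x _ hx => key x hx)]
  have d01 : i0 ≠ i1 := by simp [hi0, hi1, Fin.ext_iff]
  have d02 : i0 ≠ i2 := by simp [hi0, hi2, Fin.ext_iff]; omega
  have d03 : i0 ≠ i3 := by simp [hi0, hi3, Fin.ext_iff]; omega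
  have d12 : i1 ≠ i2 := by simp [hi1, hi2, Fin.ext_iff]; omega
  have d13 : i1 ≠ i3 := by simp [hi1, hi3, Fin.ext_iff]; omega
  have d23 : i2 ≠ i3 := by simp [hi2, hi3, Fin.ext_iff]; omega
  rw [Finset.sum_insert (by simp [d01, d02, d03]),
      Finset.sum_insert (by simp [d12, d13]),
      Finset.sum_insert (by simp [d23]), Finset.sum_singleton]
  have m0 : mk4 w z0 z1 zw1 zw i0 = z0 := by simp [mk4, hi0]
  have m1 : mk4 w z0 z1 zw1 zw i1 = z1 := by simp [mk4, hi1]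
  have m2 : mk4 w z0 z1 zw1 zw i2 = zw1 := by
    simp only [mk4, hi2, Fin.val_mk]
    rw [if_neg (by omega), if_neg (by omega)]
    simp
  have m3 : mk4 w z0 z1 zw1 zw i3 = zw := by
    simp only [mk4, hi3, Fin.val_mk]
    rw [if_neg (by omega), if_neg (by omega), if_neg (by omega)]
    simp
  rw [m0, m1, m2, m3]
  simp only [hi0, hi1, hi2, hi3, Fin.val_mk]
  ring

/-- The key combinatorial construction. -/
lemma key4 (w : ℕ) (hw : 4 ≤ w) (L M : ℤ) (hM0 : 0 ≤ M) (hl : (w : ℤ) - 2 ≤ L)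
    (hm : M ≤ L * w) :
    ∃ z0 z1 zw1 zw : ℕ, (z0 : ℤ) + z1 + zw1 + zw = L ∧
      (z1 : ℤ) + ((w : ℤ) - 1) * zw1 + (w : ℤ) * zw = M := by
  have hw' : (4 : ℤ) ≤ (w : ℤ) := by exact_mod_cast hw
  by_cases hML : M ≤ L
  · refine ⟨(L - M).toNat, M.toNat, 0, 0, ?_, ?_⟩
    · rw [Int.toNat_of_nonneg (by linarith), Int.toNat_of_nonneg hM0]; push_cast; ring
    · rw [Int.toNat_of_nonneg hM0]; push_cast; ring
  · push_neg at hML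
    set k : ℤ := (M - L + ((w : ℤ) - 2)) / ((w : ℤ) - 1) with hkdef
    have hpos : (0 : ℤ) < (w : ℤ) - 1 := by linarith
    have hdm : ((w : ℤ) - 1) * k + (M - L + ((w : ℤ) - 2)) % ((w : ℤ) - 1)
        = M - L + ((w : ℤ) - 2) := by
      rw [hkdef]; exact Int.mul_ediv_add_emod _ _
    have hrem0 : 0 ≤ (M - L + ((w : ℤ) - 2)) % ((w : ℤ) - 1) :=
      Int.emod_nonneg _ (by linarith)
    have hremlt : (M - L + ((w : ℤ) - 2)) % ((w : ℤ) - 1) < (w : ℤ) - 1 :=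
      Int.emod_lt_of_pos _ hpos
    have h1 : M - L ≤ ((w : ℤ) - 1) * k := by linarith
    have h2 : ((w : ℤ) - 1) * k ≤ M - L + ((w : ℤ) - 2) := by linarith
    have h3 : ((w : ℤ) - 1) * k ≤ M := by linarith
    have hk0 : 0 ≤ k := by
      by_contra h
      push_neg at h
      have : ((w : ℤ) - 1) * k ≤ ((w : ℤ) - 1) * (-1) :=
        mul_le_mul_of_nonneg_left (by linarith) (by linarith)
      linarith
    have hkL : k ≤ L := by
      by_contra h
      push_neg at h
      have hmul : ((w : ℤ) - 1) * (L + 1) ≤ ((w : ℤ) - 1) * k :=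
        mul_le_mul_of_nonneg_left (by linarith) (by linarith)
      nlinarith
    set r : ℤ := M - ((w : ℤ) - 1) * k with hr
    have hr0 : 0 ≤ r := by simp [hr]; linarith
    have hrL : r ≤ L := by simp [hr]; linarith
    by_cases hrk : r ≤ k
    · refine ⟨(L - k).toNat, 0, (k - r).toNat, r.toNat, ?_, ?_⟩
      · rw [Int.toNat_of_nonneg (by linarith), Int.toNat_of_nonneg (by linarith),
          Int.toNat_of_nonneg hr0]
        push_cast; ring
      · rw [Int.toNat_of_nonneg (by linarith), Int.toNat_of_nonneg hr0]
        push_cast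
        linear_combination hr
    · push_neg at hrk
      refine ⟨(L - r).toNat, (r - k).toNat, 0, k.toNat, ?_, ?_⟩
      · rw [Int.toNat_of_nonneg (by linarith), Int.toNat_of_nonneg (by linarith),
          Int.toNat_of_nonneg hk0]
        push_cast; ring
      · rw [Int.toNat_of_nonneg (by linarith), Int.toNat_of_nonneg hk0]
        push_cast
        linear_combination hr

lemma decomp (a d w : ℕ) (z : Fin (w + 1) → ℕ) :
    ∑ i : Fin (w + 1), (z i : ℤ) * ((a : ℤ) + ((i : ℕ) : ℤ) * (d : ℤ))
      = (∑ i : Fin (w + 1), (z i : ℤ)) * a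
        + (∑ i : Fin (w + 1), ((i : ℕ) : ℤ) * (z i : ℤ)) * d := by
  rw [Finset.sum_mul, Finset.sum_mul, ← Finset.sum_add_distrib]
  exact Finset.sum_congr rfl fun i _ => by ring

lemma Mle (w : ℕ) (z : Fin (w + 1) → ℕ) :
    (∑ i : Fin (w + 1), ((i : ℕ) : ℤ) * (z i : ℤ))
      ≤ (∑ i : Fin (w + 1), (z i : ℤ)) * w := by
  rw [Finset.sum_mul]
  apply Finset.sum_le_sum
  intro i _
  have h1 : ((i : ℕ) : ℤ) ≤ (w : ℤ) := by exact_mod_cast Nat.le_of_lt_succ i.isLt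
  have h2 : (0 : ℤ) ≤ (z i : ℤ) := Int.natCast_nonneg _
  nlinarith

lemma main_step (a d w : ℕ) (hw4 : 4 ≤ w) (hwa : w < a) (n : ℤ)
    (z : Fin (w + 1) → ℕ)
    (hzn : n = ∑ i : Fin (w + 1), (z i : ℤ) * ((a : ℤ) + ((i : ℕ) : ℤ) * (d : ℤ)))
    (hbig : ((w : ℤ) - 3) * ((a : ℤ) + w * d) < n) :
    ∃ z' : Fin (w + 1) → ℕ,
      (∀ i : Fin (w + 1), (i : ℕ) ∈ {i : ℕ | 1 < i ∧ i < w - 1} → z' i = 0) ∧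
      n = ∑ i : Fin (w + 1), (z' i : ℤ) * ((a : ℤ) + ((i : ℕ) : ℤ) * (d : ℤ)) ∧
      (∑ i : Fin (w + 1), (z' i : ℤ)) = ∑ i : Fin (w + 1), (z i : ℤ) := by
  set L : ℤ := ∑ i : Fin (w + 1), (z i : ℤ) with hL
  set M : ℤ := ∑ i : Fin (w + 1), ((i : ℕ) : ℤ) * (z i : ℤ) with hM
  have hn' : n = L * a + M * d := by rw [hzn, decomp]
  have hM0 : 0 ≤ M := Finset.sum_nonneg fun i _ =>
    mul_nonneg (Int.natCast_nonneg _) (Int.natCast_nonneg _)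
  have hML : M ≤ L * w := Mle w z
  have ha : (0 : ℤ) < (a : ℤ) := by exact_mod_cast (by omega : 0 < a)
  have hd : (0 : ℤ) ≤ (d : ℤ) := Int.natCast_nonneg d
  have hwz : (0 : ℤ) ≤ (w : ℤ) := Int.natCast_nonneg w
  have hX : (0 : ℤ) < (a : ℤ) + w * d := by nlinarith
  have hnle : n ≤ L * ((a : ℤ) + w * d) := by
    have := mul_le_mul_of_nonneg_right hML hd
    nlinarith
  have hLw : (w : ℤ) - 2 ≤ L := by
    have h := lt_of_lt_of_le hbig hnle
    have := lt_of_mul_lt_mul_right h (le_of_lt hX)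
    omega
  obtain ⟨z0, z1, zw1, zw, hcnt, hwt⟩ := key4 w hw4 L M hM0 hLw hML
  refine ⟨mk4 w z0 z1 zw1 zw, ?_, ?_, ?_⟩
  · intro i hi
    simp only [Set.mem_setOf_eq] at hi
    simp only [mk4]
    rw [if_neg (by omega), if_neg (by omega), if_neg (by omega), if_neg (by omega)]
  · have h := sum_mk4_gen w hw4 z0 z1 zw1 zw
      (fun j y => (y : ℤ) * ((a : ℤ) + (j : ℤ) * (d : ℤ))) (fun j => by simp)
    rw [h, hn']
    have hcast : ((w - 1 : ℕ) : ℤ) = (w : ℤ) - 1 := by omega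
    rw [hcast]
    push_cast
    linear_combination (-(a : ℤ)) * hcnt - (d : ℤ) * hwt
  · have h := sum_mk4_gen w hw4 z0 z1 zw1 zw (fun _ y => (y : ℤ)) (fun j => by simp)
    rw [h]
    exact hcnt

theorem stmt4 (a d w : ℕ) (hgcd : Nat.gcd a d = 1) (hw4 : 4 ≤ w) (hwa : w < a)
    (n : ℤ) (hn : AMem a d w ∅ n)
    (hbig : ((w : ℤ) - 3) * ((a : ℤ) + w * d) < n) :
    AMem a d w {i | 1 < i ∧ i < w - 1} n ∧
      ALen a d w ∅ n = ALen a d w {i | 1 < i ∧ i < w - 1} n := by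
  obtain ⟨z, -, hzn⟩ := hn
  obtain ⟨z', hz'G, hz'n, -⟩ := main_step a d w hw4 hwa n z hzn hbig
  refine ⟨⟨z', hz'G, hz'n⟩, ?_⟩
  ext ℓ
  simp only [ALen, Set.mem_setOf_eq]
  constructor
  · rintro ⟨y, -, hyn, hylen⟩
    obtain ⟨y', h1, h2, h3⟩ := main_step a d w hw4 hwa n y hyn hbig
    exact ⟨y', h1, h2, by rw [h3, hylen]⟩
  · rintro ⟨y, hyG, hyn, hylen⟩
    exact ⟨y, fun i hi => absurd hi (Set.notMem_empty _), hyn, hylen⟩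
end

section
/- Let S = <a, a+d, ..., a+wd> with gcd(a,d)=1 and 4 ≤ w < a, and S* = <a, a+d, a+(w−1)d, a+wd>. For every n > (w−3)(a+wd), n ∈ S if and only if n ∈ S*. -/
-- helper: construct membership from four coefficients
lemma helper (a d w : ℕ) (hw4 : 4 ≤ w) (n : ℤ) (z0 z1 zw1 zw : ℕ)
    (hn : n = (z0:ℤ)*(a:ℤ) + (z1:ℤ)*((a:ℤ)+(d:ℤ)) + (zw1:ℤ)*((a:ℤ)+((w:ℤ)-1)*(d:ℤ))
        + (zw:ℤ)*((a:ℤ)+(w:ℤ)*(d:ℤ))) :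
    AMem a d w {i | 1 < i ∧ i < w - 1} n := by
  have h0 : (0:ℕ) < w + 1 := by omega
  have h1 : (1:ℕ) < w + 1 := by omega
  have h2 : w - 1 < w + 1 := by omega
  have h3 : w < w + 1 := by omega
  set i0 : Fin (w+1) := ⟨0, h0⟩
  set i1 : Fin (w+1) := ⟨1, h1⟩
  set i2 : Fin (w+1) := ⟨w-1, h2⟩
  set i3 : Fin (w+1) := ⟨w, h3⟩
  refine ⟨fun i => if i = i0 then z0 else if i = i1 then z1 else
      if i = i2 then zw1 else if i = i3 then zw else 0, ?_, ?_⟩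
  · intro i hi
    obtain ⟨ha1, ha2⟩ := hi
    dsimp only
    split_ifs with e0 e1 e2 e3 <;>
      first
      | rfl
      | (exfalso; subst_vars; simp_all [i0, i1, i2, i3]; try omega)
  · have hsplit : ∀ i : Fin (w+1),
        ((if i = i0 then z0 else if i = i1 then z1 else
          if i = i2 then zw1 else if i = i3 then zw else 0 : ℕ) : ℤ)
        = (if i = i0 then (z0:ℤ) else 0) + (if i = i1 then (z1:ℤ) else 0)
          + (if i = i2 then (zw1:ℤ) else 0) + (if i = i3 then (zw:ℤ) else 0) := by
      intro i
      have d01 : i0 ≠ i1 := by simp [i0, i1, Fin.ext_iff]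
      have d02 : i0 ≠ i2 := by simp [i0, i2, Fin.ext_iff]; omega
      have d03 : i0 ≠ i3 := by simp [i0, i3, Fin.ext_iff]; omega
      have d12 : i1 ≠ i2 := by simp [i1, i2, Fin.ext_iff]; omega
      have d13 : i1 ≠ i3 := by simp [i1, i3, Fin.ext_iff]; omega
      have d23 : i2 ≠ i3 := by simp [i2, i3, Fin.ext_iff]; omega
      split_ifs <;> subst_vars <;> simp_all
    dsimp only
    simp only [hsplit, add_mul, Finset.sum_add_distrib, ite_mul, zero_mul,
      Finset.sum_ite_eq', Finset.mem_univ, if_true]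
    have c2 : ((i2 : ℕ) : ℤ) = (w:ℤ) - 1 := by
      simp [i2]; omega
    have c3 : ((i3 : ℕ) : ℤ) = (w:ℤ) := by simp [i3]
    simp only [i0, i1, i2, i3] at *
    push_cast
    rw [show (((w-1 : ℕ)) : ℤ) = (w:ℤ) - 1 by omega]
    linarith [hn]

theorem stmt5 (a d w : ℕ) (hgcd : Nat.gcd a d = 1) (hw4 : 4 ≤ w) (hwa : w < a)
    (n : ℤ) (hbig : ((w : ℤ) - 3) * ((a : ℤ) + w * d) < n) :
    AMem a d w ∅ n ↔ AMem a d w {i | 1 < i ∧ i < w - 1} n := by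
  constructor
  · rintro ⟨z, -, hz⟩
    obtain ⟨m, tN, hn, htm⟩ : ∃ m tN : ℕ, n = (m:ℤ) * a + (tN:ℤ) * d ∧ tN ≤ w * m := by
      refine ⟨∑ i : Fin (w+1), z i, ∑ i : Fin (w+1), (i:ℕ) * z i, ?_, ?_⟩
      · rw [hz]
        push_cast
        rw [Finset.sum_mul, Finset.sum_mul, ← Finset.sum_add_distrib]
        apply Finset.sum_congr rfl
        intro i _
        ring
      · rw [Finset.mul_sum]
        apply Finset.sum_le_sum
        intro i _
        exact Nat.mul_le_mul_right _ (Nat.le_of_lt_succ i.isLt)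
    have hw0 : 0 < w := by omega
    have htmz : (tN:ℤ) ≤ (w:ℤ) * m := by exact_mod_cast htm
    have hm2 : w - 2 ≤ m := by
      have h1 : n ≤ (m:ℤ) * ((a:ℤ) + (w:ℤ) * d) := by
        have h2 : (tN:ℤ) * d ≤ ((w:ℤ) * m) * d := by
          apply mul_le_mul_of_nonneg_right htmz (by positivity)
        rw [hn]; ring_nf; ring_nf at h2; linarith
      have h3 : ((w:ℤ) - 3) * ((a:ℤ) + (w:ℤ) * d) < (m:ℤ) * ((a:ℤ) + (w:ℤ) * d) :=
        lt_of_lt_of_le hbig h1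
      have h4 : (0:ℤ) < (a:ℤ) + (w:ℤ) * d := by
        have : (0:ℤ) < (a:ℤ) := by exact_mod_cast show 0 < a by omega
        positivity
      have h5 : (w:ℤ) - 3 < (m:ℤ) := lt_of_mul_lt_mul_right h3 (le_of_lt h4)
      omega
    obtain ⟨q, r, hqr, hrw, hqm⟩ : ∃ q r : ℕ, tN = q * w + r ∧ r < w ∧ q ≤ m := by
      refine ⟨tN / w, tN % w, (Nat.div_add_mod' tN w).symm, Nat.mod_lt _ hw0, ?_⟩
      have := Nat.div_le_div_right (c := w) htm
      rwa [Nat.mul_div_cancel_left _ hw0] at this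
    have hqrz : (tN:ℤ) = (q:ℤ) * w + r := by exact_mod_cast hqr
    by_cases hA : q + r ≤ m
    · -- use z0 = m - (q+r) copies of a, r copies of a+d, q copies of a+wd
      obtain ⟨z0, hz0⟩ : ∃ z0, m = z0 + q + r := ⟨m - (q + r), by omega⟩
      have hz0c : (m:ℤ) = (z0:ℤ) + q + r := by exact_mod_cast hz0
      apply helper a d w hw4 n z0 r 0 q
      push_cast
      linear_combination hn + (d:ℤ) * hqrz + (a:ℤ) * hz0c
    · -- use z0 copies of a, (w-r) copies of a+(w-1)d, (q+1+r-w) copies of a+wd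
      have hwr : w - 1 - r ≤ q := by
        by_contra hcon
        push_neg at hcon
        omega
      have hq1 : q + 1 ≤ m := by
        rcases Nat.lt_or_ge q m with h | h
        · omega
        · exfalso
          have hqm' : q = m := le_antisymm hqm h
          subst hqm'
          nlinarith [htm, hqr]
      obtain ⟨z0, hz0⟩ : ∃ z0, m = z0 + (q + 1) := ⟨m - (q + 1), by omega⟩
      have hz0c : (m:ℤ) = (z0:ℤ) + q + 1 := by exact_mod_cast hz0
      have hc1 : ((w - r : ℕ) : ℤ) = (w:ℤ) - r := by omega
      have hc2 : ((q + 1 + r - w : ℕ) : ℤ) = (q:ℤ) + 1 + (r:ℤ) - w := by omega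
      apply helper a d w hw4 n z0 0 (w - r) (q + 1 + r - w)
      rw [hc1, hc2]
      push_cast
      linear_combination hn + (d:ℤ) * hqrz + (a:ℤ) * hz0c
  · rintro ⟨z, -, hz⟩
    exact ⟨z, fun i h => absurd h (Set.notMem_empty _), hz⟩
end

section
/- Let S = <a, a+d, ..., a+wd> with gcd(a,d)=1 and 4 ≤ w < a. If a ≥ w² − 3w, then the set of length sets of S equals the set of length sets of S' for any monoid S' generated by a subset of the generators containing a, a+d, a+(w−1)d, a+wd, i.e., L(S) = L(S') where L(T) = {L_T(n) : n ∈ T}. -/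
private lemma sumEq (a d w : ℕ) (z : Fin (w+1) → ℕ) :
    ∑ i : Fin (w+1), (z i : ℤ) * ((a:ℤ) + ((i:ℕ):ℤ) * (d:ℤ))
      = ((∑ i : Fin (w+1), z i : ℕ) : ℤ) * (a:ℤ)
        + ((∑ i : Fin (w+1), (i:ℕ) * z i : ℕ) : ℤ) * (d:ℤ) := by
  push_cast
  rw [Finset.sum_mul, Finset.sum_mul, ← Finset.sum_add_distrib]
  exact Finset.sum_congr rfl fun i _ => by ring

private lemma extract {a d w : ℕ} {G : Set ℕ} {n ℓ : ℤ} (h : ℓ ∈ ALen a d w G n) :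
    ∃ L M : ℕ, ℓ = (L:ℤ) ∧ n = (L:ℤ)*(a:ℤ) + (M:ℤ)*(d:ℤ) ∧ M ≤ L * w := by
  obtain ⟨z, hz, hn, hl⟩ := h
  refine ⟨∑ i : Fin (w+1), z i, ∑ i : Fin (w+1), (i:ℕ) * z i, ?_, ?_, ?_⟩
  · rw [← hl]; push_cast; rfl
  · rw [hn, sumEq]
  · calc ∑ i : Fin (w+1), (i:ℕ) * z i ≤ ∑ i : Fin (w+1), w * z i :=
        Finset.sum_le_sum fun i _ => Nat.mul_le_mul_right _ (Nat.lt_succ_iff.mp i.isLt)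
    _ = (∑ i, z i) * w := by rw [← Finset.mul_sum, Nat.mul_comm]

private lemma sum_single {w : ℕ} (j : Fin (w+1)) (c : ℕ) (f : Fin (w+1) → ℕ) :
    ∑ i : Fin (w+1), f i * (Pi.single j c : Fin (w+1) → ℕ) i = f j * c := by
  simp [Pi.single_apply, mul_ite, Finset.sum_ite_eq']

private lemma sum_glue {w : ℕ} (g : Fin (w+1) → ℕ) (j0 j1 j2 j3 : Fin (w+1)) (p q r s : ℕ) :
    ∑ i : Fin (w+1), g i * (Pi.single j0 p + Pi.single j1 q + Pi.single j2 r
      + Pi.single j3 s : Fin (w+1) → ℕ) i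
      = g j0 * p + g j1 * q + g j2 * r + g j3 * s := by
  simp only [Pi.add_apply, Nat.mul_add, Finset.sum_add_distrib, sum_single]

private lemma cover {a d w : ℕ} (hw4 : 4 ≤ w) {G : Set ℕ}
    (hG : G ⊆ {i | 2 ≤ i ∧ i ≤ w - 2}) (L M : ℕ) (hm : M ≤ L * w)
    (hcase : w - 2 ≤ L ∨ M = L * w ∨ M = 0) :
    ∃ z : Fin (w+1) → ℕ, (∀ i : Fin (w+1), (i:ℕ) ∈ G → z i = 0) ∧
      (∑ i : Fin (w+1), z i) = L ∧ (∑ i : Fin (w+1), (i:ℕ) * z i) = M := by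
  set t := min (M / (w-1)) L with ht
  have hw1 : 0 < w - 1 := by omega
  have htL : t ≤ L := min_le_right _ _
  have htM : t * (w-1) ≤ M := by
    rcases min_cases (M / (w-1)) L with ⟨h1, h2⟩ | ⟨h1, h2⟩
    · rw [ht, h1]; exact Nat.div_mul_le_self _ _
    · rw [ht, h1]
      calc L * (w - 1) ≤ (M / (w-1)) * (w-1) := Nat.mul_le_mul_right _ (le_of_lt h2)
      _ ≤ M := Nat.div_mul_le_self _ _
  have hw' : w - 1 + 1 = w := by omega
  have e3 : L * (w-1) + L = L * w := by
    conv_rhs => rw [← hw']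
    rw [Nat.mul_succ]
  have hu : M - t * (w-1) ≤ L := by
    rcases le_or_gt (M / (w-1)) L with h | h
    · have ht' : t * (w-1) = M / (w-1) * (w-1) := by rw [ht, min_eq_left h]
      have e1 : w - 1 + (w-1) * (M / (w-1)) + M % (w-1) = M + (w-1) := by
        have := Nat.div_add_mod M (w-1); omega
      have e1' : M / (w-1) * (w-1) = (w-1) * (M / (w-1)) := Nat.mul_comm _ _
      have e2 : M % (w-1) < w - 1 := Nat.mod_lt _ hw1
      rcases hcase with hc | hc | hc
      · omega
      · have hLle : L ≤ M / (w-1) := by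
          apply (Nat.le_div_iff_mul_le hw1).mpr
          calc L * (w-1) ≤ L * w := Nat.mul_le_mul_left _ (by omega)
          _ = M := hc.symm
        have hLeq : M / (w-1) = L := le_antisymm h hLle
        have : t * (w-1) = L * (w-1) := by rw [ht', hLeq]
        omega
      · omega
    · have ht' : t * (w-1) = L * (w-1) := by rw [ht, min_eq_right (le_of_lt h)]
      omega
  -- now build counts
  set u := M - t * (w-1) with hudef
  set s := min u t with hs
  set q := u - s with hq
  set r := t - s with hr
  set p := L - t - q with hp
  have hsu : s ≤ u := min_le_left _ _
  have hst : s ≤ t := min_le_right _ _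
  have hqle : q ≤ L - t := by omega
  refine ⟨(Pi.single (⟨0, by omega⟩ : Fin (w+1)) p + Pi.single (⟨1, by omega⟩ : Fin (w+1)) q
      + Pi.single (⟨w-1, by omega⟩ : Fin (w+1)) r + Pi.single (⟨w, by omega⟩ : Fin (w+1)) s),
      ?_, ?_, ?_⟩
  · intro i hi
    obtain ⟨h2i, hiw⟩ := hG hi
    simp only [Pi.add_apply, Pi.single_apply, Fin.ext_iff, Fin.val_mk]
    split_ifs <;> omega
  · have h := sum_glue (fun _ => 1) (⟨0, by omega⟩ : Fin (w+1)) ⟨1, by omega⟩ ⟨w-1, by omega⟩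
      ⟨w, by omega⟩ p q r s
    simp only [one_mul] at h
    rw [h]
    omega
  · have h := sum_glue (fun i : Fin (w+1) => (i:ℕ)) (⟨0, by omega⟩ : Fin (w+1)) ⟨1, by omega⟩
      ⟨w-1, by omega⟩ ⟨w, by omega⟩ p q r s
    rw [h]
    show 0 * p + 1 * q + (w-1) * r + w * s = M
    have e4 : (w-1) * r = (w-1) * t - (w-1) * s := by rw [hr, Nat.mul_sub]
    have e4' : (w-1) * s ≤ (w-1) * t := Nat.mul_le_mul_left _ hst
    have e5 : w * s = (w-1) * s + s := by
      conv_lhs => rw [← hw']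
      rw [Nat.succ_mul]
    have e6 : t * (w-1) = (w-1) * t := Nat.mul_comm _ _
    omega


private lemma memALen_of_parts {a d w : ℕ} (hw4 : 4 ≤ w) {G : Set ℕ}
    (hG : G ⊆ {i | 2 ≤ i ∧ i ≤ w - 2}) {n : ℤ} {L M : ℕ}
    (hn : n = (L:ℤ)*(a:ℤ) + (M:ℤ)*(d:ℤ)) (hm : M ≤ L * w)
    (hcase : w - 2 ≤ L ∨ M = L * w ∨ M = 0) :
    (L:ℤ) ∈ ALen a d w G n := by
  obtain ⟨z, hz, hL, hM⟩ := cover (a := a) (d := d) hw4 hG L M hm hcase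
  refine ⟨z, hz, ?_, ?_⟩
  · rw [sumEq, hL, hM, hn]
  · rw [show (∑ i : Fin (w+1), (z i : ℤ)) = ((∑ i : Fin (w+1), z i : ℕ) : ℤ) by push_cast; rfl, hL]

private lemma amem_of_parts {a d w : ℕ} (hw4 : 4 ≤ w) {G : Set ℕ}
    (hG : G ⊆ {i | 2 ≤ i ∧ i ≤ w - 2}) {n : ℤ} {L M : ℕ}
    (hn : n = (L:ℤ)*(a:ℤ) + (M:ℤ)*(d:ℤ)) (hm : M ≤ L * w)
    (hcase : w - 2 ≤ L ∨ M = L * w ∨ M = 0) :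
    AMem a d w G n := by
  obtain ⟨z, hz, h, _⟩ := memALen_of_parts hw4 hG hn hm hcase
  exact ⟨z, hz, h⟩

private lemma ALen_mono {a d w : ℕ} {G : Set ℕ} {n : ℤ} :
    ALen a d w G n ⊆ ALen a d w ∅ n := by
  rintro ℓ ⟨z, _, h⟩
  exact ⟨z, fun i hi => absurd hi (Set.notMem_empty _), h⟩

private lemma AMem_mono {a d w : ℕ} {G : Set ℕ} {n : ℤ} (h : AMem a d w G n) :
    AMem a d w ∅ n := by
  obtain ⟨z, _, h⟩ := h
  exact ⟨z, fun i hi => absurd hi (Set.notMem_empty _), h⟩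

private lemma dpos {a d w : ℕ} (hgcd : Nat.gcd a d = 1) (hw4 : 4 ≤ w) (hwa : w < a) :
    0 < d := by
  rcases Nat.eq_zero_or_pos d with h | h
  · subst h; simp at hgcd; omega
  · exact h

private lemma step {a d w : ℕ} (hgcd : Nat.gcd a d = 1) (hw4 : 4 ≤ w) (hwa : w < a)
    {L₁ M₁ L₂ M₂ : ℕ}
    (h : (L₁:ℤ)*(a:ℤ) + (M₁:ℤ)*(d:ℤ) = (L₂:ℤ)*(a:ℤ) + (M₂:ℤ)*(d:ℤ))
    (hlt : L₁ < L₂) :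
    ∃ t : ℤ, 1 ≤ t ∧ ((L₂:ℤ) - L₁) = (d:ℤ) * t ∧ ((M₁:ℤ) - M₂) = (a:ℤ) * t := by
  have hd : (0:ℤ) < d := by exact_mod_cast dpos hgcd hw4 hwa
  have hco : IsCoprime (d:ℤ) (a:ℤ) := by
    rw [Int.isCoprime_iff_gcd_eq_one, Int.gcd_natCast_natCast, Nat.gcd_comm]
    exact hgcd
  have heq : ((L₂:ℤ) - L₁) * a = ((M₁:ℤ) - M₂) * d := by linarith
  have hdvd : (d:ℤ) ∣ ((L₂:ℤ) - L₁) * a := ⟨(M₁:ℤ) - M₂, by linarith⟩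
  obtain ⟨t, ht⟩ := hco.dvd_of_dvd_mul_right hdvd
  refine ⟨t, ?_, ht, ?_⟩
  · have h1 : (0:ℤ) < (L₂:ℤ) - L₁ := by exact_mod_cast Int.ofNat_lt.mpr hlt |>.trans_le (le_refl _) |> (by intro; linarith : (L₁:ℤ) < L₂ → (0:ℤ) < (L₂:ℤ) - L₁)
    nlinarith
  · have : ((M₁:ℤ) - M₂) * d = ((a:ℤ) * t) * d := by rw [← heq, ht]; ring
    exact mul_right_cancel₀ (by positivity) this

private lemma haNat {a w : ℕ} (hw4 : 4 ≤ w) (ha : (w : ℤ) ^ 2 - 3 * w ≤ (a : ℤ)) :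
    w * (w - 3) ≤ a := by
  have h3w : (3:ℕ) ≤ w := by omega
  have h2 : ((w:ℤ)) * ((w:ℤ) - 3) ≤ (a:ℤ) := by nlinarith [ha]
  have h3 : ((w * (w-3) : ℕ) : ℤ) = (w:ℤ) * ((w:ℤ) - 3) := by
    push_cast [Nat.cast_sub h3w]
    ring
  rw [← h3] at h2
  exact_mod_cast h2

private lemma multiLemma {a d w : ℕ} (hgcd : Nat.gcd a d = 1) (hw4 : 4 ≤ w) (hwa : w < a)
    (ha : (w : ℤ) ^ 2 - 3 * w ≤ (a : ℤ)) {G : Set ℕ} (hG : G ⊆ {i | 2 ≤ i ∧ i ≤ w - 2})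
    {n ℓ ℓ' : ℤ} (hx : ℓ ∈ ALen a d w ∅ n) (hy : ℓ' ∈ ALen a d w ∅ n) (hne : ℓ ≠ ℓ') :
    ℓ ∈ ALen a d w G n := by
  obtain ⟨L, M, rfl, hn, hM⟩ := extract hx
  obtain ⟨L', M', hl', hn', hM'⟩ := extract hy
  have haN : w * (w - 3) ≤ a := haNat hw4 ha
  have hLne : L ≠ L' := by rintro rfl; exact hne (by rw [hl'])
  have heq : (L:ℤ)*(a:ℤ) + (M:ℤ)*(d:ℤ) = (L':ℤ)*(a:ℤ) + (M':ℤ)*(d:ℤ) := by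
    rw [← hn, ← hn']
  rcases Nat.lt_or_ge L L' with h | h
  · obtain ⟨t, ht1, _, hMt⟩ := step hgcd hw4 hwa heq h
    have hMa : (a:ℤ) ≤ (M:ℤ) := by
      nlinarith [mul_nonneg (Int.natCast_nonneg a) (by linarith : (0:ℤ) ≤ t - 1),
        Int.natCast_nonneg M']
    have hMaN : a ≤ M := by exact_mod_cast hMa
    rcases Nat.lt_or_ge L (w-2) with hL | hL
    · have hLw : L * w ≤ w * (w-3) := by
        rw [Nat.mul_comm]
        exact Nat.mul_le_mul_left _ (by omega)
      have hMLw : M = L * w := by omega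
      exact memALen_of_parts hw4 hG hn hM (Or.inr (Or.inl hMLw))
    · exact memALen_of_parts hw4 hG hn hM (Or.inl hL)
  · have hlt : L' < L := lt_of_le_of_ne h (Ne.symm hLne)
    obtain ⟨t, ht1, _, hMt⟩ := step hgcd hw4 hwa heq.symm hlt
    have hM'a : (a:ℤ) ≤ (M':ℤ) := by
      nlinarith [mul_nonneg (Int.natCast_nonneg a) (by linarith : (0:ℤ) ≤ t - 1),
        Int.natCast_nonneg M]
    have hM'aN : a ≤ M' := by exact_mod_cast hM'a
    have h2 : (w-3) * w ≤ L' * w := by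
      rw [Nat.mul_comm w (w-3)] at haN
      omega
    have h3 : w - 3 ≤ L' := Nat.le_of_mul_le_mul_right h2 (by omega)
    exact memALen_of_parts hw4 hG hn hM (Or.inl (by omega))

theorem stmt7 (a d w : ℕ) (hgcd : Nat.gcd a d = 1) (hw4 : 4 ≤ w) (hwa : w < a)
    (ha : (w : ℤ) ^ 2 - 3 * w ≤ (a : ℤ))
    (G : Set ℕ) (hG : G ⊆ {i | 2 ≤ i ∧ i ≤ w - 2}) :
    ALenSets a d w ∅ = ALenSets a d w G := by
  have haN : w * (w - 3) ≤ a := haNat hw4 ha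
  apply Set.Subset.antisymm
  · rintro X ⟨n, hmem, rfl⟩
    obtain ⟨z, hz, hnz⟩ := hmem
    have hℓ0 : (∑ i : Fin (w+1), (z i:ℤ)) ∈ ALen a d w ∅ n := ⟨z, hz, hnz, rfl⟩
    by_cases hall : ∀ x ∈ ALen a d w ∅ n, x = (∑ i : Fin (w+1), (z i:ℤ))
    · -- singleton case
      obtain ⟨L, M, hLe, hn, hM⟩ := extract hℓ0
      have hn' : ((L:ℤ)*(a:ℤ)) = (L:ℤ)*(a:ℤ) + ((0:ℕ):ℤ)*(d:ℤ) := by push_cast; ring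
      rcases Nat.lt_or_ge L (w-2) with hL | hL
      · -- small L: use n' = L * a
        refine ⟨(L:ℤ)*(a:ℤ), amem_of_parts hw4 hG hn' (by omega) (Or.inr (Or.inr rfl)), ?_⟩
        have hsingle_n : ALen a d w ∅ n = {(L:ℤ)} := by
          apply Set.eq_singleton_iff_unique_mem.mpr
          exact ⟨hLe ▸ hℓ0, fun x hx => (hall x hx).trans hLe⟩
        have hLmem : (L:ℤ) ∈ ALen a d w G ((L:ℤ)*(a:ℤ)) :=
          memALen_of_parts hw4 hG hn' (by omega) (Or.inr (Or.inr rfl))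
        have hsingle' : ALen a d w G ((L:ℤ)*(a:ℤ)) = {(L:ℤ)} := by
          apply Set.eq_singleton_iff_unique_mem.mpr
          refine ⟨hLmem, ?_⟩
          intro x hx
          obtain ⟨L', M', rfl, he, hM'⟩ := extract (ALen_mono hx)
          by_contra hne
          have hLL' : L' ≠ L := by
            intro h; exact hne (by rw [h])
          rcases Nat.lt_or_ge L' L with hc | hc
          · obtain ⟨t, ht1, _, hMt⟩ := step hgcd hw4 hwa
              (show (L':ℤ)*(a:ℤ) + (M':ℤ)*(d:ℤ) = (L:ℤ)*(a:ℤ) + ((0:ℕ):ℤ)*(d:ℤ) by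
                rw [← he]; exact hn') hc
            have hMa : (a:ℤ) ≤ (M':ℤ) := by
              nlinarith [mul_nonneg (Int.natCast_nonneg a) (by linarith : (0:ℤ) ≤ t - 1)]
            have hMaN : a ≤ M' := by exact_mod_cast hMa
            have e1 : L' * w ≤ (w-4) * w := Nat.mul_le_mul_right _ (by omega)
            have e2 : (w-3) * w = (w-4) * w + w := by
              rw [show w-3 = (w-4)+1 by omega, Nat.succ_mul]
            have e3 : w * (w-3) = (w-3) * w := Nat.mul_comm _ _
            omega
          · have hc' : L < L' := lt_of_le_of_ne hc (Ne.symm hLL')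
            obtain ⟨t, ht1, _, hMt⟩ := step hgcd hw4 hwa
              (show (L:ℤ)*(a:ℤ) + ((0:ℕ):ℤ)*(d:ℤ) = (L':ℤ)*(a:ℤ) + (M':ℤ)*(d:ℤ) by
                rw [← he]; exact hn'.symm) hc'
            have h5 : (5:ℤ) ≤ (a:ℤ) := by exact_mod_cast (by omega : 5 ≤ a)
            nlinarith [mul_nonneg (Int.natCast_nonneg a) (by linarith : (0:ℤ) ≤ t - 1),
              Int.natCast_nonneg M']
        rw [hsingle_n, hsingle']
      · -- big L: use n itself
        refine ⟨n, amem_of_parts hw4 hG hn hM (Or.inl hL), ?_⟩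
        apply Set.Subset.antisymm
        · intro x hx
          rw [hall x hx, hLe]
          exact memALen_of_parts hw4 hG hn hM (Or.inl hL)
        · exact ALen_mono
    · push_neg at hall
      obtain ⟨y, hy, hyne⟩ := hall
      refine ⟨n, ?_, ?_⟩
      · obtain ⟨z', hz', hnz', _⟩ :=
          multiLemma hgcd hw4 hwa ha hG hℓ0 hy (fun h => hyne h.symm)
        exact ⟨z', hz', hnz'⟩
      · apply Set.Subset.antisymm ?_ ALen_mono
        intro x hx
        by_cases hxy : x = y
        · subst hxy
          exact multiLemma hgcd hw4 hwa ha hG hx hℓ0 hyne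
        · exact multiLemma hgcd hw4 hwa ha hG hx hy hxy
  · rintro X ⟨n, hmem, rfl⟩
    refine ⟨n, AMem_mono hmem, ?_⟩
    obtain ⟨z, hz, hnz⟩ := hmem
    have hℓ0 : (∑ i : Fin (w+1), (z i:ℤ)) ∈ ALen a d w G n := ⟨z, hz, hnz, rfl⟩
    apply Set.Subset.antisymm ALen_mono ?_
    intro x hx
    by_cases hxe : x = (∑ i : Fin (w+1), (z i:ℤ))
    · rw [hxe]; exact hℓ0
    · exact multiLemma hgcd hw4 hwa ha hG hx (ALen_mono hℓ0) hxe
end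

section
/- Let S = <a, a+d, ..., a+wd> with gcd(a,d)=1 and 4 ≤ w < a. If a > w² − 3w + 1, then F(S) = F(S') for any numerical monoid S' obtained from S by omitting any subset of the generators a+2d, ..., a+(w−2)d, where F denotes the Frobenius number (the largest integer not in the monoid). -/
lemma amem_empty_of (a d w : ℕ) (G : Set ℕ) (n : ℤ) (h : AMem a d w G n) :
    AMem a d w ∅ n := by
  obtain ⟨z, _, hz⟩ := h
  exact ⟨z, fun i hi => hi.elim, hz⟩

lemma amem_add (a d w : ℕ) (G : Set ℕ) (m n : ℤ) (hm : AMem a d w G m)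
    (hn : AMem a d w G n) : AMem a d w G (m + n) := by
  obtain ⟨z, hz0, hz⟩ := hm
  obtain ⟨y, hy0, hy⟩ := hn
  refine ⟨z + y, fun i hi => by simp [hz0 i hi, hy0 i hi], ?_⟩
  rw [hz, hy, ← Finset.sum_add_distrib]
  congr 1; funext i; push_cast [Pi.add_apply]; ring

lemma amem_single (a d w : ℕ) (G : Set ℕ) (i : Fin (w + 1)) (hi : (i : ℕ) ∉ G) (c : ℕ) :
    AMem a d w G ((c : ℤ) * ((a : ℤ) + ((i : ℕ) : ℤ) * d)) := by
  refine ⟨fun j => if j = i then c else 0, fun j hj => ?_, ?_⟩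
  · by_cases h : j = i
    · exact absurd (h ▸ hj) hi
    · simp [h]
  · have key : ∀ j : Fin (w + 1), j ∈ Finset.univ →
        (((if j = i then c else 0 : ℕ) : ℤ)) * ((a : ℤ) + ((j : ℕ) : ℤ) * d) =
        if j = i then (c : ℤ) * ((a : ℤ) + ((i : ℕ) : ℤ) * d) else 0 := by
      intro j _
      by_cases h : j = i
      · subst h; simp
      · simp [h]
    rw [Finset.sum_congr rfl key, Finset.sum_ite_eq' Finset.univ i]
    simp

lemma amem_construct (a d w : ℕ) (G : Set ℕ) (hw4 : 4 ≤ w)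
    (hG : G ⊆ {i | 2 ≤ i ∧ i ≤ w - 2}) (k t : ℕ) (hk : w - 2 ≤ k) (ht : t ≤ k * w) :
    AMem a d w G ((k : ℤ) * a + (t : ℤ) * d) := by
  have hcast : ((w - 1 : ℕ) : ℤ) = (w : ℤ) - 1 := by
    push_cast [Nat.cast_sub (by omega : 1 ≤ w)]; ring
  set m : ℕ := min (t / (w - 1)) k with hm
  have hmk : m ≤ k := min_le_right _ _
  have hms : m * (w - 1) ≤ t :=
    le_trans (Nat.mul_le_mul (min_le_left _ _) le_rfl) (Nat.div_mul_le_self _ _)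
  set s : ℕ := t - m * (w - 1) with hs
  have hsk : s ≤ k := by
    rcases le_or_gt (t / (w - 1)) k with h | h
    · have hmm : m = t / (w - 1) := min_eq_left h
      have h3 : t / (w - 1) * (w - 1) + t % (w - 1) = t := Nat.div_add_mod' t (w - 1)
      have h4 : t % (w - 1) < w - 1 := Nat.mod_lt t (by omega)
      rw [hs, hmm]
      omega
    · have hmm : m = k := min_eq_right (le_of_lt h)
      have h5 : k * (w - 1) + k = k * w := by rw [← Nat.mul_succ]; congr 1; omega
      rw [hs, hmm]
      omega
  set x : ℕ := min s m with hx
  set y : ℕ := m - x with hy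
  set u : ℕ := s - x with hu
  set v : ℕ := k - m - u with hv
  have hxs : x ≤ s := min_le_left _ _
  have hxm : x ≤ m := min_le_right _ _
  have hux : u + x = s := by omega
  have huk : u ≤ k - m := by
    rcases le_or_gt s m with h | h
    · have : x = s := min_eq_left h
      omega
    · have : x = m := min_eq_right (le_of_lt h)
      omega
  have hcount : (v : ℤ) + (u : ℤ) + (y : ℤ) + (x : ℤ) = (k : ℤ) := by
    have : v + u + y + x = k := by omega
    exact_mod_cast this
  have h2 : (t : ℤ) = (s : ℤ) + (m : ℤ) * ((w : ℤ) - 1) := by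
    have h2' : s + m * (w - 1) = t := by omega
    have h2'' : (s : ℤ) + (m : ℤ) * ((w - 1 : ℕ) : ℤ) = (t : ℤ) := by exact_mod_cast h2'
    rw [hcast] at h2''
    linarith
  have h3 : (y : ℤ) = (m : ℤ) - (x : ℤ) := by
    have : y + x = m := by omega
    have := congrArg (fun n : ℕ => (n : ℤ)) this
    push_cast at this
    linarith
  have h1 : (u : ℤ) + (x : ℤ) = (s : ℤ) := by exact_mod_cast hux
  have hidx : (u : ℤ) * 1 + (y : ℤ) * ((w : ℤ) - 1) + (x : ℤ) * w = t := by
    rw [h3]; linear_combination h1 - h2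
  have m0 := amem_single a d w G ⟨0, by omega⟩
    (fun h => by have := hG h; simp only [Set.mem_setOf_eq] at this; omega) v
  have m1 := amem_single a d w G ⟨1, by omega⟩
    (fun h => by have := hG h; simp only [Set.mem_setOf_eq] at this; omega) u
  have m2 := amem_single a d w G ⟨w - 1, by omega⟩
    (fun h => by have := hG h; simp only [Set.mem_setOf_eq] at this; omega) y
  have m3 := amem_single a d w G ⟨w, by omega⟩
    (fun h => by have := hG h; simp only [Set.mem_setOf_eq] at this; omega) x
  have hsum := amem_add _ _ _ _ _ _ (amem_add _ _ _ _ _ _ (amem_add _ _ _ _ _ _ m0 m1) m2) m3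
  simp only [Fin.val_mk] at hsum
  rw [hcast] at hsum
  have heq : (k : ℤ) * a + (t : ℤ) * d =
      (v : ℤ) * ((a : ℤ) + ((0 : ℕ) : ℤ) * d) + (u : ℤ) * ((a : ℤ) + ((1 : ℕ) : ℤ) * d) +
      (y : ℤ) * ((a : ℤ) + ((w : ℤ) - 1) * d) + (x : ℤ) * ((a : ℤ) + (w : ℤ) * d) := by
    push_cast
    linear_combination -((a : ℤ) * hcount + (d : ℤ) * hidx)
  rw [heq]
  exact hsum

lemma amem_decomp (a d w : ℕ) (n : ℤ) (h : AMem a d w ∅ n) :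
    ∃ k t : ℕ, n = (k : ℤ) * a + (t : ℤ) * d ∧ t ≤ k * w := by
  obtain ⟨z, _, hz⟩ := h
  refine ⟨∑ i : Fin (w + 1), z i, ∑ i : Fin (w + 1), (i : ℕ) * z i, ?_, ?_⟩
  · rw [hz]
    push_cast
    rw [Finset.sum_mul, Finset.sum_mul, ← Finset.sum_add_distrib]
    exact Finset.sum_congr rfl fun i _ => by ring
  · calc ∑ i : Fin (w + 1), (i : ℕ) * z i ≤ ∑ i : Fin (w + 1), w * z i := by
          refine Finset.sum_le_sum fun i _ => Nat.mul_le_mul ?_ le_rfl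
          exact Nat.lt_succ_iff.mp i.isLt
      _ = (∑ i : Fin (w + 1), z i) * w := by rw [← Finset.mul_sum]; ring

lemma frob_not_mem (a d w : ℕ) (hgcd : Nat.gcd a d = 1) (hw4 : 4 ≤ w) (hwa : w < a)
    (hd : 1 ≤ d) :
    ¬ AMem a d w ∅ ((((a - 2) / w : ℕ) : ℤ) * a + ((a : ℤ) - 1) * d) := by
  intro h
  obtain ⟨k, t, hn, htk⟩ := amem_decomp a d w _ h
  set q : ℕ := (a - 2) / w with hq
  have ha5 : 5 ≤ a := by omega
  have hcop : IsCoprime (a : ℤ) (d : ℤ) := by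
    rw [Int.isCoprime_iff_gcd_eq_one, Int.gcd_natCast_natCast, hgcd]
  have hdvd : (a : ℤ) ∣ ((t : ℤ) - ((a : ℤ) - 1)) * d := by
    refine ⟨(q : ℤ) - (k : ℤ), ?_⟩
    linear_combination -hn
  obtain ⟨c, hc⟩ := hcop.dvd_of_dvd_mul_right hdvd
  -- k = q - c * d
  have ha0 : (a : ℤ) ≠ 0 := by positivity
  have hk : (k : ℤ) = (q : ℤ) - c * d := by
    have h9 : ((q : ℤ) - (k : ℤ) - c * d) * a = 0 := by linear_combination hn + (d : ℤ) * hc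
    rcases mul_eq_zero.mp h9 with h | h
    · linarith
    · exact absurd h ha0
  have hqw : (q : ℤ) * w ≤ (a : ℤ) - 2 := by
    have h1 : q * w ≤ a - 2 := Nat.div_mul_le_self _ _
    have h2 : ((a - 2 : ℕ) : ℤ) = (a : ℤ) - 2 := by
      push_cast [Nat.cast_sub (by omega : 2 ≤ a)]; ring
    calc (q : ℤ) * w = ((q * w : ℕ) : ℤ) := by push_cast; ring
      _ ≤ ((a - 2 : ℕ) : ℤ) := by exact_mod_cast h1
      _ = (a : ℤ) - 2 := h2
  have htk' : (t : ℤ) ≤ (k : ℤ) * w := by exact_mod_cast htk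
  have ht0 : (0 : ℤ) ≤ t := Int.natCast_nonneg t
  have hd' : (1 : ℤ) ≤ d := by exact_mod_cast hd
  have hw' : (4 : ℤ) ≤ w := by exact_mod_cast hw4
  have ha' : (5 : ℤ) ≤ a := by exact_mod_cast ha5
  rcases le_or_gt 0 c with hc0 | hc0
  · -- t ≥ a - 1,  k ≤ q,  t ≤ k*w ≤ q*w ≤ a-2
    have h1 : (a : ℤ) - 1 ≤ t := by nlinarith
    have h2 : (k : ℤ) ≤ q := by nlinarith
    have h3 : (k : ℤ) * w ≤ (q : ℤ) * w := by nlinarith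
    linarith
  · -- c ≤ -1 so t < 0
    have h1 : c ≤ -1 := by omega
    have h2 : (t : ℤ) ≤ -1 := by nlinarith
    linarith

lemma frob_upper (a d w : ℕ) (hgcd : Nat.gcd a d = 1) (hw4 : 4 ≤ w) (hwa : w < a)
    (ha : (w : ℤ) ^ 2 - 3 * w + 1 < (a : ℤ)) (hd : 1 ≤ d)
    (G : Set ℕ) (hG : G ⊆ {i | 2 ≤ i ∧ i ≤ w - 2}) (n : ℤ)
    (hn : (((a - 2) / w : ℕ) : ℤ) * a + ((a : ℤ) - 1) * d < n) :
    AMem a d w G n := by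
  set q : ℕ := (a - 2) / w with hq
  have ha5 : 5 ≤ a := by omega
  haveI : NeZero a := ⟨by omega⟩
  set t0 : ℕ := ((n : ZMod a) * (d : ZMod a)⁻¹).val with ht0def
  have ht0a : t0 < a := ZMod.val_lt _
  have hdvd : (a : ℤ) ∣ n - (t0 : ℤ) * d := by
    have hcop : Nat.Coprime d a := Nat.coprime_comm.mp hgcd
    have hunit : (d : ZMod a) * (d : ZMod a)⁻¹ = 1 := ZMod.coe_mul_inv_eq_one d hcop
    rw [← ZMod.intCast_zmod_eq_zero_iff_dvd]
    push_cast
    rw [ht0def, ZMod.natCast_val, ZMod.cast_id]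
    rw [mul_assoc, mul_comm ((d : ZMod a))⁻¹, hunit, mul_one, sub_self]
  obtain ⟨c, hc⟩ := hdvd
  have ha0 : (0 : ℤ) < a := by exact_mod_cast Nat.pos_of_ne_zero (by omega)
  have hd' : (1 : ℤ) ≤ d := by exact_mod_cast hd
  have hw' : (4 : ℤ) ≤ w := by exact_mod_cast hw4
  -- q ≥ w - 3
  have hq3 : w - 3 ≤ q := by
    rw [hq, Nat.le_div_iff_mul_le (by omega : 0 < w)]
    have h1 : (w : ℤ) ^ 2 - 3 * w + 2 ≤ a := by linarith [Int.add_one_le_iff.mpr ha]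
    have h2 : ((w - 3 : ℕ) : ℤ) = (w : ℤ) - 3 := by
      push_cast [Nat.cast_sub (by omega : 3 ≤ w)]; ring
    have h3 : ((a - 2 : ℕ) : ℤ) = (a : ℤ) - 2 := by
      push_cast [Nat.cast_sub (by omega : 2 ≤ a)]; ring
    have : ((w - 3 : ℕ) : ℤ) * w ≤ ((a - 2 : ℕ) : ℤ) := by rw [h2, h3]; nlinarith
    exact_mod_cast this
  -- c ≥ q + 1
  have hcq : (q : ℤ) + 1 ≤ c := by
    have h1 : (t0 : ℤ) * d ≤ ((a : ℤ) - 1) * d := by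
      have : (t0 : ℤ) ≤ (a : ℤ) - 1 := by
        have : (t0 : ℤ) < a := by exact_mod_cast ht0a
        linarith
      nlinarith
    have h2 : (q : ℤ) * a < c * a := by linarith [hc, hn]
    have h3 : (q : ℤ) < c := lt_of_mul_lt_mul_right h2 (le_of_lt ha0)
    exact Int.add_one_le_iff.mpr h3
  set k : ℕ := c.toNat with hkdef
  have hck : (k : ℤ) = c := Int.toNat_of_nonneg (by linarith [Int.natCast_nonneg q])
  have hqk : q + 1 ≤ k := by
    have : (q : ℤ) + 1 ≤ (k : ℤ) := by rw [hck]; exact hcq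
    exact_mod_cast this
  have hk2 : w - 2 ≤ k := by omega
  -- t0 ≤ k * w
  have ht0k : t0 ≤ k * w := by
    have hdam : w * q + (a - 2) % w = a - 2 := Nat.div_add_mod (a - 2) w
    have hmod : (a - 2) % w < w := Nat.mod_lt _ (by omega)
    have h7 : (q + 1) * w = w * q + w := by ring
    have h6 : a - 1 ≤ (q + 1) * w := by omega
    have h8 : (q + 1) * w ≤ k * w := Nat.mul_le_mul hqk le_rfl
    omega
  have hneq : n = (k : ℤ) * a + (t0 : ℤ) * d := by
    rw [hck]; linarith [hc]
  rw [hneq]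
  exact amem_construct a d w G hw4 hG k t0 hk2 ht0k

theorem stmt8 (a d w : ℕ) (hgcd : Nat.gcd a d = 1) (hw4 : 4 ≤ w) (hwa : w < a)
    (ha : (w : ℤ) ^ 2 - 3 * w + 1 < (a : ℤ))
    (G : Set ℕ) (hG : G ⊆ {i | 2 ≤ i ∧ i ≤ w - 2}) :
    ∃ F : ℤ, IsGreatest {n : ℤ | ¬ AMem a d w ∅ n} F ∧
      IsGreatest {n : ℤ | ¬ AMem a d w G n} F := by
  have hd : 1 ≤ d := by
    rcases Nat.eq_zero_or_pos d with h | h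
    · subst h; simp [Nat.gcd_zero_right] at hgcd; omega
    · exact h
  refine ⟨(((a - 2) / w : ℕ) : ℤ) * a + ((a : ℤ) - 1) * d, ⟨?_, ?_⟩, ⟨?_, ?_⟩⟩
  · exact frob_not_mem a d w hgcd hw4 hwa hd
  · intro n hn
    by_contra hlt
    push_neg at hlt
    exact hn (amem_empty_of a d w G n (frob_upper a d w hgcd hw4 hwa ha hd G hG n hlt))
  · exact fun h => frob_not_mem a d w hgcd hw4 hwa hd (amem_empty_of a d w G _ h)
  · intro n hn
    by_contra hlt
    push_neg at hlt
    exact hn (frob_upper a d w hgcd hw4 hwa ha hd G hG n hlt)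
end

section
/- The Frobenius number of the arithmetical numerical monoid S = <a, a+d, ..., a+wd> with gcd(a,d)=1 and 0 < w < a equals (⌈(a−1)/w⌉ − 1)·a + (a−1)·d. -/
lemma amem_exists (a d w : ℕ) (n : ℤ) (h : AMem a d w ∅ n) :
    ∃ m s : ℕ, s ≤ m * w ∧ n = (m : ℤ) * a + (s : ℤ) * d := by
  obtain ⟨z, -, hz⟩ := h
  refine ⟨∑ i, z i, ∑ i : Fin (w+1), (i : ℕ) * z i, ?_, ?_⟩
  · calc ∑ i : Fin (w+1), (i : ℕ) * z i ≤ ∑ i : Fin (w+1), w * z i :=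
          Finset.sum_le_sum (fun i _ => Nat.mul_le_mul_right _ (Nat.le_of_lt_succ i.isLt))
    _ = (∑ i, z i) * w := by rw [← Finset.mul_sum]; ring
  · rw [hz]; push_cast
    rw [Finset.sum_mul, Finset.sum_mul, ← Finset.sum_add_distrib]
    exact Finset.sum_congr rfl (fun i _ => by ring)

lemma amem_of (a d w : ℕ) (hw0 : 0 < w) (n : ℤ) (m s : ℕ) (hs : s ≤ m * w)
    (hn : n = (m : ℤ) * a + (s : ℤ) * d) : AMem a d w ∅ n := by
  set q := s / w with hq
  set r := s % w with hr
  have hrw : r < w := Nat.mod_lt _ hw0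
  have hqr : w * q + r = s := Nat.div_add_mod s w
  have hqm : q ≤ m := by
    have h := Nat.div_le_div_right (c := w) hs
    rwa [Nat.mul_div_cancel m hw0] at h
  set e := (if r = 0 then 0 else 1) with he
  have hqem : q + e ≤ m := by
    rcases Nat.eq_zero_or_pos r with h0 | h0
    · simp [he, h0, hqm]
    · have hqm' : q < m := by
        by_contra hc
        push_neg at hc
        have h2 : m * w ≤ q * w := Nat.mul_le_mul_right w hc
        have h3 : q * w = w * q := Nat.mul_comm q w
        omega
      have : e = 1 := by simp [he]; omega
      omega
  set p := m - (q + e) with hp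
  have hpm : q + e + p = m := by omega
  refine ⟨fun i => (if i = (⟨w, by omega⟩ : Fin (w+1)) then q else 0) +
      (if i = (⟨r, by omega⟩ : Fin (w+1)) then e else 0) +
      (if i = (⟨0, by omega⟩ : Fin (w+1)) then p else 0), by simp, ?_⟩
  push_cast
  simp only [add_mul, ite_mul, zero_mul, Finset.sum_add_distrib,
    Finset.sum_ite_eq', Finset.mem_univ, if_true, Fin.val_mk]
  rw [hn]
  have hqr' : (w : ℤ) * q + r = s := by exact_mod_cast hqr
  have hpm' : (q : ℤ) + e + p = m := by exact_mod_cast hpm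
  have her : (e : ℤ) * r = r := by
    rcases Nat.eq_zero_or_pos r with h0 | h0
    · simp [h0]
    · have : e = 1 := by simp [he]; omega
      rw [this]; push_cast; ring
  linear_combination (a : ℤ) * hpm'.symm + (d : ℤ) * hqr'.symm + (d : ℤ) * her.symm

theorem stmt9 (a d w : ℕ) (hgcd : Nat.gcd a d = 1) (hw0 : 0 < w) (hwa : w < a) :
    IsGreatest {n : ℤ | ¬ AMem a d w ∅ n}
      ((⌈(((a : ℚ) - 1) / (w : ℚ))⌉ - 1) * (a : ℤ) + ((a : ℤ) - 1) * (d : ℤ)) := by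
  have ha2 : 2 ≤ a := by omega
  have hd1 : 1 ≤ d := by
    rcases Nat.eq_zero_or_pos d with h | h
    · subst h; simp [Nat.gcd_zero_right] at hgcd; omega
    · exact h
  set c : ℤ := ⌈(((a : ℚ) - 1) / (w : ℚ))⌉ with hc
  have hwQ : (0 : ℚ) < w := by exact_mod_cast hw0
  have hc1 : (a : ℤ) - 1 ≤ c * w := by
    have h := Int.le_ceil (((a : ℚ) - 1) / (w : ℚ))
    rw [div_le_iff₀ hwQ] at h
    have h2 : (((a : ℤ) - 1 : ℤ) : ℚ) ≤ (((c * w : ℤ)) : ℚ) := by push_cast; exact h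
    exact_mod_cast h2
  have hc2 : (c - 1) * w < (a : ℤ) - 1 := by
    have h := Int.ceil_lt_add_one (((a : ℚ) - 1) / (w : ℚ))
    have h2 : ((c : ℚ) - 1) < ((a : ℚ) - 1) / (w : ℚ) := by push_cast at h ⊢; linarith
    rw [lt_div_iff₀ hwQ] at h2
    have h3 : ((((c - 1) * w : ℤ)) : ℚ) < (((a : ℤ) - 1 : ℤ) : ℚ) := by push_cast; linarith
    exact_mod_cast h3
  have hcop : IsCoprime (a : ℤ) (d : ℤ) := by
    rw [Int.isCoprime_iff_gcd_eq_one]; exact_mod_cast hgcd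
  constructor
  · -- F is not representable
    intro hF
    obtain ⟨m, s, hs, heq⟩ := amem_exists a d w _ hF
    have hdvd : (a : ℤ) ∣ ((a : ℤ) - 1 - s) := by
      apply hcop.dvd_of_dvd_mul_right
      exact ⟨(m : ℤ) - c + 1, by linear_combination heq⟩
    have hs_ge : (a : ℤ) - 1 ≤ s := by
      by_contra hlt
      push_neg at hlt
      have hne : (a : ℤ) - 1 - s ≠ 0 := by
        intro h0
        omega
      have := Int.le_of_dvd (by omega) hdvd
      omega
    have hneg : ((a : ℤ) - 1 - s) * d ≤ 0 :=
      mul_nonpos_of_nonpos_of_nonneg (by omega) (by positivity)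
    have hma : (m : ℤ) * a ≤ (c - 1) * a := by linarith [heq]
    have hmc : (m : ℤ) ≤ c - 1 :=
      le_of_mul_le_mul_right (by linarith) (by exact_mod_cast Nat.lt_of_lt_of_le Nat.zero_lt_one (by omega) : (0:ℤ) < a)
    have hsw : (s : ℤ) ≤ (m : ℤ) * w := by exact_mod_cast hs
    have : (m : ℤ) * w ≤ (c - 1) * w :=
      mul_le_mul_of_nonneg_right hmc (by positivity)
    linarith
  · -- upper bound
    intro n hn
    by_contra hlt
    push_neg at hlt
    apply hn
    obtain ⟨u, v, huv⟩ := hcop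
    have haZ : (0 : ℤ) < a := by exact_mod_cast Nat.lt_of_lt_of_le Nat.zero_lt_one (by omega)
    set t : ℤ := (n * v) % a with ht
    have ht0 : 0 ≤ t := Int.emod_nonneg _ (by omega)
    have hta : t < a := Int.emod_lt_of_pos _ haZ
    have hdvd : (a : ℤ) ∣ (n - t * d) := by
      refine ⟨n * u + ((n * v) / a) * d, ?_⟩
      have hE := Int.mul_ediv_add_emod (n * v) (a : ℤ)
      linear_combination n * huv.symm + (d : ℤ) * hE.symm
    set m : ℤ := (n - t * d) / a with hm
    have hma : m * a = n - t * d := Int.ediv_mul_cancel hdvd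
    have hnm : n = m * a + t * d := by linarith
    have hnF : (c - 1) * a + ((a : ℤ) - 1) * d < n := hlt
    have htd : ((a : ℤ) - 1 - t) * d ≥ 0 :=
      mul_nonneg (by omega) (by positivity)
    have hmca : (c - 1) * a < m * a := by nlinarith
    have hmc : c - 1 < m := lt_of_mul_lt_mul_right hmca (le_of_lt haZ)
    have hc0 : 1 ≤ c := by nlinarith
    have hm0 : 0 ≤ m := by omega
    have htw : t ≤ m * w := by
      have h1 : c * w ≤ m * w := mul_le_mul_of_nonneg_right (by omega) (by positivity)
      omega
    refine amem_of a d w hw0 n m.toNat t.toNat ?_ ?_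
    · have h1 : (t.toNat : ℤ) ≤ ((m.toNat * w : ℕ) : ℤ) := by
        push_cast
        rw [Int.toNat_of_nonneg ht0, Int.toNat_of_nonneg hm0]
        exact htw
      exact_mod_cast h1
    · rw [Int.toNat_of_nonneg ht0, Int.toNat_of_nonneg hm0]
      exact hnm
end

section
/- Let S = <a, a+d, ..., a+wd> with gcd(a,d)=1 and 0 < w < a, and for 1 < r < w−1 let S_r be the monoid generated by all generators of S except a+rd. Then S \ S_r = {a + rd}, i.e., the only element of S not in S_r is the omitted generator itself. -/
section Aux

/-- single-index coefficient function -/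
def sing (w j c : ℕ) : Fin (w + 1) → ℕ := fun i => if (i : ℕ) = j then c else 0

lemma sum_sing_g {w j : ℕ} (c : ℕ) (hj : j ≤ w) (g : ℕ → ℕ) :
    ∑ i : Fin (w + 1), sing w j c i * g (i : ℕ) = c * g j := by
  rw [Finset.sum_eq_single (⟨j, Nat.lt_succ_of_le hj⟩ : Fin (w + 1))]
  · simp [sing]
  · intro b _ hb
    have hbj : (b : ℕ) ≠ j := fun h => hb (Fin.ext h)
    simp [sing, hbj]
  · simp

lemma sum_sing {w j : ℕ} (c : ℕ) (hj : j ≤ w) :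
    ∑ i : Fin (w + 1), sing w j c i = c := by
  have h := sum_sing_g (w := w) c hj (fun _ => 1)
  simpa using h

lemma sum_sing_wt {w j : ℕ} (c : ℕ) (hj : j ≤ w) :
    ∑ i : Fin (w + 1), sing w j c i * (i : ℕ) = c * j :=
  sum_sing_g c hj id

lemma sing_zero_of_ne {w j c r : ℕ} (hjr : j ≠ r) (i : Fin (w + 1)) (hi : (i : ℕ) = r) :
    sing w j c i = 0 := by
  simp only [sing, hi]
  rw [if_neg (fun h => hjr h.symm)]

lemma sum_formula (a d w : ℕ) (z : Fin (w + 1) → ℕ) :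
    ∑ i : Fin (w + 1), (z i : ℤ) * ((a : ℤ) + ((i : ℕ) : ℤ) * (d : ℤ))
      = ((∑ i : Fin (w + 1), z i : ℕ) : ℤ) * a
        + ((∑ i : Fin (w + 1), z i * (i : ℕ) : ℕ) : ℤ) * d := by
  push_cast
  rw [Finset.sum_mul, Finset.sum_mul, ← Finset.sum_add_distrib]
  exact Finset.sum_congr rfl fun i _ => by ring

lemma rep (w r m t : ℕ) (hw4 : 4 ≤ w) (hr1 : 1 < r) (hr2 : r + 1 < w)
    (hm : 2 ≤ m) (ht : t ≤ m * w) :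
    ∃ z : Fin (w + 1) → ℕ, (∀ i : Fin (w + 1), (i : ℕ) = r → z i = 0) ∧
      (∑ i, z i = m) ∧ (∑ i, z i * (i : ℕ) = t) := by
  have hw0 : 0 < w := by omega
  obtain ⟨q, s, hts, hsw⟩ : ∃ q s, t = q * w + s ∧ s < w :=
    ⟨t / w, t % w, by rw [Nat.mul_comm]; exact (Nat.div_add_mod t w).symm,
      Nat.mod_lt _ hw0⟩
  have hqm : q ≤ m := by
    by_contra h
    push_neg at h
    have h2 : (m + 1) * w ≤ q * w := Nat.mul_le_mul_right w (by omega)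
    rw [add_one_mul] at h2
    omega
  by_cases hs0 : s = 0
  · -- t = q*w : use q at w, m-q at 0
    refine ⟨sing w w q + sing w 0 (m - q), ?_, ?_, ?_⟩
    · intro i hi
      simp [sing_zero_of_ne (by omega : w ≠ r) i hi,
            sing_zero_of_ne (by omega : 0 ≠ r) i hi]
    · simp only [Pi.add_apply, Finset.sum_add_distrib,
        sum_sing (w := w) (j := w) q le_rfl, sum_sing (w := w) (j := 0) (m - q) (by omega)]
      omega
    · simp only [Pi.add_apply, add_mul, Finset.sum_add_distrib,
        sum_sing_wt (w := w) (j := w) q le_rfl, sum_sing_wt (w := w) (j := 0) (m - q) (by omega)]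
      omega
  · have hqm' : q < m := by
      by_contra h
      push_neg at h
      have h2 : m * w ≤ q * w := Nat.mul_le_mul_right w h
      omega
    by_cases hsr : s = r
    · rcases Nat.eq_zero_or_pos q with rfl | hq1
      · -- t = r : use 1 at 1, 1 at r-1, m-2 at 0
        refine ⟨sing w 1 1 + sing w (r - 1) 1 + sing w 0 (m - 2), ?_, ?_, ?_⟩
        · intro i hi
          simp [sing_zero_of_ne (by omega : 1 ≠ r) i hi,
                sing_zero_of_ne (by omega : r - 1 ≠ r) i hi,
                sing_zero_of_ne (by omega : 0 ≠ r) i hi]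
        · simp only [Pi.add_apply, Finset.sum_add_distrib,
            sum_sing (w := w) (j := 1) 1 (by omega), sum_sing (w := w) (j := r - 1) 1 (by omega),
            sum_sing (w := w) (j := 0) (m - 2) (by omega)]
          omega
        · simp only [Pi.add_apply, add_mul, Finset.sum_add_distrib,
            sum_sing_wt (w := w) (j := 1) 1 (by omega), sum_sing_wt (w := w) (j := r - 1) 1 (by omega),
            sum_sing_wt (w := w) (j := 0) (m - 2) (by omega)]
          omega
      · -- t = q*w + r, q ≥ 1 : use q-1 at w, 1 at w-1, 1 at r+1, m-q-1 at 0
        obtain ⟨q', rfl⟩ : ∃ q', q = q' + 1 := ⟨q - 1, by omega⟩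
        rw [add_one_mul] at hts
        refine ⟨sing w w q' + sing w (w - 1) 1 + sing w (r + 1) 1
            + sing w 0 (m - q' - 2), ?_, ?_, ?_⟩
        · intro i hi
          simp [sing_zero_of_ne (by omega : w ≠ r) i hi,
                sing_zero_of_ne (by omega : w - 1 ≠ r) i hi,
                sing_zero_of_ne (by omega : r + 1 ≠ r) i hi,
                sing_zero_of_ne (by omega : 0 ≠ r) i hi]
        · simp only [Pi.add_apply, Finset.sum_add_distrib,
            sum_sing (w := w) (j := w) q' le_rfl, sum_sing (w := w) (j := w - 1) 1 (by omega),
            sum_sing (w := w) (j := r + 1) 1 (by omega), sum_sing (w := w) (j := 0) (m - q' - 2) (by omega)]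
          omega
        · simp only [Pi.add_apply, add_mul, Finset.sum_add_distrib,
            sum_sing_wt (w := w) (j := w) q' le_rfl, sum_sing_wt (w := w) (j := w - 1) 1 (by omega),
            sum_sing_wt (w := w) (j := r + 1) 1 (by omega),
            sum_sing_wt (w := w) (j := 0) (m - q' - 2) (by omega)]
          omega
    · -- s ≠ 0, s ≠ r : use q at w, 1 at s, m-q-1 at 0
      refine ⟨sing w w q + sing w s 1 + sing w 0 (m - q - 1), ?_, ?_, ?_⟩
      · intro i hi
        simp [sing_zero_of_ne (by omega : w ≠ r) i hi,
              sing_zero_of_ne (by omega : s ≠ r) i hi,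
              sing_zero_of_ne (by omega : 0 ≠ r) i hi]
      · simp only [Pi.add_apply, Finset.sum_add_distrib,
          sum_sing (w := w) (j := w) q le_rfl, sum_sing (w := w) (j := s) 1 (by omega),
          sum_sing (w := w) (j := 0) (m - q - 1) (by omega)]
        omega
      · simp only [Pi.add_apply, add_mul, Finset.sum_add_distrib,
          sum_sing_wt (w := w) (j := w) q le_rfl, sum_sing_wt (w := w) (j := s) 1 (by omega),
          sum_sing_wt (w := w) (j := 0) (m - q - 1) (by omega)]
        omega

end Aux

theorem stmt10 (a d w r : ℕ) (hgcd : Nat.gcd a d = 1) (hw0 : 0 < w) (hwa : w < a)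
    (hr1 : 1 < r) (hr2 : r < w - 1) :
    {n : ℤ | AMem a d w ∅ n ∧ ¬ AMem a d w {r} n} = {((a : ℤ) + r * d)} := by
  have ha : 2 ≤ a := by omega
  have hd : 1 ≤ d := by
    rcases Nat.eq_zero_or_pos d with h | h
    · subst h; simp [Nat.gcd_zero_right] at hgcd; omega
    · exact h
  have hw4 : 4 ≤ w := by omega
  have hiw : ∀ i : Fin (w + 1), (i : ℕ) ≤ w := fun i => Nat.lt_succ_iff.mp i.isLt
  ext n
  simp only [Set.mem_setOf_eq, Set.mem_singleton_iff, Set.mem_empty_iff_false,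
    false_implies, implies_true, true_and, AMem]
  constructor
  · rintro ⟨⟨z, hz⟩, hns⟩
    rw [sum_formula] at hz
    set m := ∑ i : Fin (w + 1), z i with hm
    set t := ∑ i : Fin (w + 1), z i * (i : ℕ) with htdef
    have htm : t ≤ m * w := by
      rw [htdef, hm, Finset.sum_mul]
      exact Finset.sum_le_sum fun i _ => Nat.mul_le_mul_left _ (hiw i)
    rcases Nat.lt_or_ge m 2 with h2 | h2
    · rcases (by omega : m = 0 ∨ m = 1) with h0 | h1
      · exfalso; apply hns
        rw [h0, zero_mul] at htm
        refine ⟨0, by simp, ?_⟩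
        rw [hz, h0, (by omega : t = 0)]; simp
      · rw [h1, one_mul] at htm
        by_cases hrt : t = r
        · rw [hz, h1, hrt]; push_cast; ring
        · exfalso; apply hns
          refine ⟨sing w t 1, fun i hi => sing_zero_of_ne (fun h => hrt h) i hi, ?_⟩
          rw [sum_formula, sum_sing (w := w) (j := t) 1 htm, sum_sing_wt (w := w) (j := t) 1 htm, hz, h1]
          push_cast; ring
    · exfalso; apply hns
      obtain ⟨z', hz'0, hz'm, hz't⟩ := rep w r m t hw4 hr1 (by omega) h2 htm
      exact ⟨z', hz'0, by rw [sum_formula, hz'm, hz't, hz]⟩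
  · rintro rfl
    constructor
    · refine ⟨sing w r 1, ?_⟩
      rw [sum_formula, sum_sing (w := w) (j := r) 1 (by omega), sum_sing_wt (w := w) (j := r) 1 (by omega)]
      push_cast; ring
    · rintro ⟨z, hz0, hz⟩
      rw [sum_formula] at hz
      set m := ∑ i : Fin (w + 1), z i with hm
      set t := ∑ i : Fin (w + 1), z i * (i : ℕ) with htdef
      have htm : t ≤ m * w := by
        rw [htdef, hm, Finset.sum_mul]
        exact Finset.sum_le_sum fun i _ => Nat.mul_le_mul_left _ (hiw i)
      have ha' : (2 : ℤ) ≤ (a : ℤ) := by exact_mod_cast ha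
      have hd' : (1 : ℤ) ≤ (d : ℤ) := by exact_mod_cast hd
      rcases Nat.lt_or_ge m 2 with h2 | h2
      · rcases (by omega : m = 0 ∨ m = 1) with h0 | h1
        · rw [h0, zero_mul] at htm
          rw [h0, (by omega : t = 0)] at hz
          simp at hz
          have hrd : (0 : ℤ) ≤ (r : ℤ) * d := by positivity
          linarith
        · -- m = 1 : then t = r, but exactly one generator used, which is ≠ r
          rw [h1] at hz
          push_cast at hz
          have htr' : t = r := by
            have hdne : (d : ℤ) ≠ 0 := by linarith
            have h3 : (r : ℤ) * d = (t : ℤ) * d := by linarith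
            exact_mod_cast (mul_right_cancel₀ hdne h3).symm
          obtain ⟨i₀, -, hi₀⟩ : ∃ i₀ ∈ Finset.univ, z i₀ ≠ 0 := by
            apply Finset.exists_ne_zero_of_sum_ne_zero
            rw [← hm]; omega
          have hone : z i₀ = 1 := by
            have h1' : z i₀ ≤ m := hm ▸ Finset.single_le_sum
              (f := z) (fun i _ => Nat.zero_le _) (Finset.mem_univ i₀)
            omega
          have hrest : ∀ j, j ≠ i₀ → z j = 0 := by
            intro j hj
            have hpair : z i₀ + z j = ∑ x ∈ ({i₀, j} : Finset (Fin (w + 1))), z x :=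
              (Finset.sum_pair (Ne.symm hj)).symm
            have hle : ∑ x ∈ ({i₀, j} : Finset (Fin (w + 1))), z x ≤ m :=
              hm ▸ Finset.sum_le_sum_of_subset (Finset.subset_univ _)
            omega
          have hti : t = (i₀ : ℕ) := by
            rw [htdef, Finset.sum_eq_single i₀ (fun b _ hb => by rw [hrest b hb]; ring)
              (fun h => absurd (Finset.mem_univ i₀) h), hone, one_mul]
          exact absurd (hz0 i₀ (by omega)) (by omega)
      · -- m ≥ 2 : impossible by coprimality
        have key : ((m : ℤ) - 1) * a = ((r : ℤ) - t) * d := by linear_combination -hz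
        have hm2 : (2 : ℤ) ≤ (m : ℤ) := by exact_mod_cast h2
        have hposl : (0 : ℤ) < ((m : ℤ) - 1) * a := by nlinarith
        have hpos : (0 : ℤ) < (r : ℤ) - t := by nlinarith
        have hco : IsCoprime (a : ℤ) (d : ℤ) := by
          rw [Int.isCoprime_iff_gcd_eq_one]
          simpa using hgcd
        have hdvd : (a : ℤ) ∣ ((r : ℤ) - t) := by
          apply hco.dvd_of_dvd_mul_right
          exact ⟨(m : ℤ) - 1, by linarith [key]⟩
        have := Int.le_of_dvd hpos hdvd
        omega
end
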